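/- Let G be a graph consisting of a single vertex w together with f pendant 4-cycles, e pendant even cycles of length ≠ 4, and o pendant odd cycles attached at w (all cycles pairwise meeting only at w), with f + e + o ≥ 1. Then gap(G) = f + max{0, e − 1} if e + o ≥ 1, and gap(G) = f + 1 if e + o = 0. -/

import Mathlib

structure LoopGraph (V : Type*) where
  Adj : V → V → Prop
  symm : ∀ u v, Adj u v → Adj v u

namespace LoopGraph

variable {V : Type*} [Fintype V] [DecidableEq V]

/-- `C` is a set-join cover of `G`: a finite family of set-joins `K ∨ L`
(with `K`, `L` nonempty) whose edge sets union to `E(G)`. -/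
def IsCover (G : LoopGraph V) (C : Finset (Finset V × Finset V)) : Prop :=
  (∀ p ∈ C, p.1.Nonempty ∧ p.2.Nonempty) ∧
  (∀ u v : V, G.Adj u v ↔ ∃ p ∈ C, (u ∈ p.1 ∧ v ∈ p.2) ∨ (u ∈ p.2 ∧ v ∈ p.1))

/-- The component set of a set-join cover: all sets occurring as a part. -/
def sjComponents (C : Finset (Finset V × Finset V)) : Finset (Finset V) :=
  C.image Prod.fst ∪ C.image Prod.snd

/-- The SNT-rank: minimal number of distinct components over all set-join covers. -/
noncomputable def stp (G : LoopGraph V) : ℕ :=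
  sInf {n | ∃ C : Finset (Finset V × Finset V), G.IsCover C ∧ (sjComponents C).card = n}

/-- `gap G = |V(G)| - stp G`. -/
noncomputable def gap (G : LoopGraph V) : ℕ :=
  Fintype.card V - G.stp

/-- No vertices `u₁ ≠ u₂`, `v₁ ≠ v₂` with all four pairs `{uᵢ, vⱼ}` edges. -/
def StronglyC4Free (G : LoopGraph V) : Prop :=
  ¬ ∃ u₁ u₂ v₁ v₂ : V, u₁ ≠ u₂ ∧ v₁ ≠ v₂ ∧
    G.Adj u₁ v₁ ∧ G.Adj u₁ v₂ ∧ G.Adj u₂ v₁ ∧ G.Adj u₂ v₂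

/-- Induced subgraph on a finset of vertices. -/
def induce (G : LoopGraph V) (s : Finset V) : LoopGraph {x // x ∈ s} :=
  ⟨fun a b => G.Adj a b, fun _ _ h => G.symm _ _ h⟩

/-- Degree of a vertex; a loop counts twice. -/
noncomputable def deg (G : LoopGraph V) (x : V) : ℕ :=
  {y | G.Adj x y}.ncard + {y | y = x ∧ G.Adj x y}.ncard

end LoopGraph

open LoopGraph


open LoopGraph Finset

namespace Stmt19

structure Fl (V : Type*) [Fintype V] [DecidableEq V] where
  G : LoopGraph V
  m : ℕ
  hm : 1 ≤ m
  len : Fin m → ℕ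
  hlen : ∀ i, 3 ≤ len i
  w : V
  x : Fin m → ℕ → V
  hxw : ∀ i j, 1 ≤ j → j ≤ len i - 1 → x i j ≠ w
  hinj : ∀ i j i' j', 1 ≤ j → j ≤ len i - 1 → 1 ≤ j' → j' ≤ len i' - 1 →
      x i j = x i' j' → i = i' ∧ j = j'
  hcover : ∀ z : V, z = w ∨ ∃ i j, 1 ≤ j ∧ j ≤ len i - 1 ∧ z = x i j
  hadj : ∀ a b : V, G.Adj a b ↔ ∃ i : Fin m,
      ((a = w ∧ b = x i 1) ∨ (b = w ∧ a = x i 1)) ∨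
      ((a = w ∧ b = x i (len i - 1)) ∨ (b = w ∧ a = x i (len i - 1))) ∨
      (∃ j, 1 ≤ j ∧ j + 1 ≤ len i - 1 ∧
        ((a = x i j ∧ b = x i (j + 1)) ∨ (b = x i j ∧ a = x i (j + 1))))

namespace Fl

variable {V : Type*} [Fintype V] [DecidableEq V] (F : Fl V)

/-- number of internal vertices of cycle `i` -/
def k (i : Fin F.m) : ℕ := F.len i - 1

lemma hk2 (i : Fin F.m) : 2 ≤ F.k i := by
  have := F.hlen i; unfold k; omega

lemma xw {i : Fin F.m} {j : ℕ} (h1 : 1 ≤ j) (h2 : j ≤ F.k i) : F.x i j ≠ F.w :=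
  F.hxw i j h1 h2

lemma xinj {i i' : Fin F.m} {j j' : ℕ} (h1 : 1 ≤ j) (h2 : j ≤ F.k i)
    (h1' : 1 ≤ j') (h2' : j' ≤ F.k i') (h : F.x i j = F.x i' j') : i = i' ∧ j = j' :=
  F.hinj i j i' j' h1 h2 h1' h2' h

lemma adj_w1 (i : Fin F.m) : F.G.Adj F.w (F.x i 1) :=
  (F.hadj _ _).2 ⟨i, Or.inl (Or.inl ⟨rfl, rfl⟩)⟩

lemma adj_wk (i : Fin F.m) : F.G.Adj F.w (F.x i (F.k i)) :=
  (F.hadj _ _).2 ⟨i, Or.inr (Or.inl (Or.inl ⟨rfl, rfl⟩))⟩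

lemma adj_step {i : Fin F.m} {j : ℕ} (h1 : 1 ≤ j) (h2 : j + 1 ≤ F.k i) :
    F.G.Adj (F.x i j) (F.x i (j+1)) :=
  (F.hadj _ _).2 ⟨i, Or.inr (Or.inr ⟨j, h1, h2, Or.inl ⟨rfl, rfl⟩⟩)⟩

lemma adj_symm {a b : V} (h : F.G.Adj a b) : F.G.Adj b a := F.G.symm _ _ h

/-- neighbours of an internal vertex -/
lemma adj_elim {i : Fin F.m} {p : ℕ} {z : V} (h1 : 1 ≤ p) (h2 : p ≤ F.k i)
    (h : F.G.Adj z (F.x i p)) :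
    (z = F.w ∧ (p = 1 ∨ p = F.k i)) ∨
    ∃ q, 1 ≤ q ∧ q ≤ F.k i ∧ z = F.x i q ∧ (q + 1 = p ∨ q = p + 1) := by
  have hk := F.hk2 i
  rcases (F.hadj z (F.x i p)).1 h with ⟨i', hc⟩
  have hL := F.hlen i'
  have hke : F.k i' = F.len i' - 1 := rfl
  have hLi := F.hlen i
  have hkei : F.k i = F.len i - 1 := rfl
  rcases hc with (⟨hz, hb⟩ | ⟨hb, hz⟩) | (⟨hz, hb⟩ | ⟨hb, hz⟩) | ⟨j, hj1, hj2, (⟨hz, hb⟩ | ⟨hb, hz⟩)⟩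
  · -- z = w, x i p = x i' 1
    obtain ⟨rfl, hp⟩ := F.xinj h1 h2 le_rfl (by have := F.hk2 i'; omega) hb
    exact Or.inl ⟨hz, Or.inl hp⟩
  · -- x i p = w : impossible
    exact absurd hb (F.xw h1 h2)
  · -- z = w, x i p = x i' (k i')
    obtain ⟨rfl, hp⟩ := F.xinj h1 h2 (by have := F.hk2 i'; omega) le_rfl hb
    exact Or.inl ⟨hz, Or.inr hp⟩
  · exact absurd hb (F.xw h1 h2)
  · -- z = x i' j, x i p = x i' (j+1)
    obtain ⟨rfl, hp⟩ := F.xinj h1 h2 (by omega) hj2 hb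
    exact Or.inr ⟨j, hj1, by omega, hz, Or.inl hp.symm⟩
  · -- x i p = x i' j, z = x i' (j+1)
    obtain ⟨rfl, hp⟩ := F.xinj h1 h2 hj1 (by omega) hb
    exact Or.inr ⟨j+1, by omega, hj2, hz, Or.inr (by omega)⟩

/-- neighbours of `w` -/
lemma adj_w_elim {z : V} (h : F.G.Adj z F.w) :
    ∃ i, z = F.x i 1 ∨ z = F.x i (F.k i) := by
  rcases (F.hadj z F.w).1 h with ⟨i', hc⟩
  have hL := F.hlen i'
  have hke : F.k i' = F.len i' - 1 := rfl
  rcases hc with (⟨hz, hb⟩ | ⟨hb, hz⟩) | (⟨hz, hb⟩ | ⟨hb, hz⟩) | ⟨j, hj1, hj2, (⟨hz, hb⟩ | ⟨hb, hz⟩)⟩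
  · exact absurd hb.symm (F.xw le_rfl (by have := F.hk2 i'; omega))
  · exact ⟨i', Or.inl hz⟩
  · exact absurd hb.symm (F.xw (by have := F.hk2 i'; omega) le_rfl)
  · exact ⟨i', Or.inr hz⟩
  · exact absurd hb.symm (F.xw (by omega) (by omega))
  · exact absurd hb.symm (F.xw hj1 (by omega))

lemma noloop (z : V) : ¬ F.G.Adj z z := by
  intro h
  rcases (F.hadj z z).1 h with ⟨i', hc⟩
  have hL := F.hlen i'
  have hke : F.k i' = F.len i' - 1 := rfl
  rcases hc with (⟨hz, hb⟩ | ⟨hb, hz⟩) | (⟨hz, hb⟩ | ⟨hb, hz⟩) | ⟨j, hj1, hj2, (⟨hz, hb⟩ | ⟨hb, hz⟩)⟩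
  · exact F.xw le_rfl (by have := F.hk2 i'; omega) (hz ▸ hb).symm
  · exact F.xw le_rfl (by have := F.hk2 i'; omega) (hb ▸ hz).symm
  · exact F.xw (by have := F.hk2 i'; omega) le_rfl (hz ▸ hb).symm
  · exact F.xw (by have := F.hk2 i'; omega) le_rfl (hb ▸ hz).symm
  · have := F.xinj (i := i') (i' := i') hj1 (by omega) (by omega) (by omega) (hz.symm.trans hb)
    omega
  · have := F.xinj (i := i') (i' := i') hj1 (by omega) (by omega) (by omega) (hb.symm.trans hz)
    omega

/-- internal vertices of cycle `i` -/
def X (i : Fin F.m) : Finset V := (Finset.Icc 1 (F.k i)).image (F.x i)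

lemma mem_X {i : Fin F.m} {z : V} : z ∈ F.X i ↔ ∃ j, 1 ≤ j ∧ j ≤ F.k i ∧ z = F.x i j := by
  constructor
  · intro h
    obtain ⟨j, hj, rfl⟩ := Finset.mem_image.1 h
    exact ⟨j, (Finset.mem_Icc.1 hj).1, (Finset.mem_Icc.1 hj).2, rfl⟩
  · rintro ⟨j, h1, h2, rfl⟩
    exact Finset.mem_image.2 ⟨j, Finset.mem_Icc.2 ⟨h1, h2⟩, rfl⟩

lemma card_X (i : Fin F.m) : (F.X i).card = F.k i := by
  rw [X, Finset.card_image_of_injOn, Nat.card_Icc]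
  · omega
  · intro a ha b hb hab
    have ha' := Finset.mem_Icc.1 (Finset.mem_coe.1 ha)
    have hb' := Finset.mem_Icc.1 (Finset.mem_coe.1 hb)
    exact (F.xinj ha'.1 ha'.2 hb'.1 hb'.2 hab).2

lemma univ_eq : (Finset.univ : Finset V) = insert F.w (Finset.univ.biUnion F.X) := by
  apply Finset.Subset.antisymm ?_ (Finset.subset_univ _)
  intro z _
  rcases F.hcover z with rfl | ⟨i, j, h1, h2, rfl⟩
  · exact Finset.mem_insert_self _ _
  · exact Finset.mem_insert_of_mem (Finset.mem_biUnion.2 ⟨i, Finset.mem_univ _,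
      F.mem_X.2 ⟨j, h1, h2, rfl⟩⟩)

lemma X_disjoint {i i' : Fin F.m} (h : i ≠ i') : Disjoint (F.X i) (F.X i') := by
  rw [Finset.disjoint_left]
  intro z hz hz'
  obtain ⟨j, h1, h2, rfl⟩ := F.mem_X.1 hz
  obtain ⟨j', h1', h2', he⟩ := F.mem_X.1 hz'
  exact h (F.xinj h1 h2 h1' h2' he).1

lemma w_not_mem_X (i : Fin F.m) : F.w ∉ F.X i := by
  intro h
  obtain ⟨j, h1, h2, he⟩ := F.mem_X.1 h
  exact F.xw h1 h2 he.symm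

lemma card_V : Fintype.card V = 1 + ∑ i, F.k i := by
  classical
  have hw : F.w ∉ Finset.univ.biUnion F.X := by
    intro h
    obtain ⟨i, _, hi⟩ := Finset.mem_biUnion.1 h
    exact F.w_not_mem_X i hi
  have hdisj : ∀ i ∈ Finset.univ, ∀ i' ∈ Finset.univ, i ≠ i' →
      Disjoint (F.X i) (F.X i') := fun i _ i' _ h => F.X_disjoint h
  rw [← Finset.card_univ, F.univ_eq, Finset.card_insert_of_notMem hw,
    Finset.card_biUnion hdisj]
  simp only [card_X]
  omega

end Fl
end Stmt19

set_option linter.unusedSectionVars false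
set_option linter.unusedVariables false
open LoopGraph Finset
namespace Stmt19
namespace Fl
open scoped Classical

variable {V : Type*} [Fintype V] [DecidableEq V] (F : Fl V)

section Cover

variable (C : Finset (Finset V × Finset V))

/-- odd-position internal vertices -/
noncomputable def oV (i : Fin F.m) : Finset V :=
  ((Finset.Icc 1 (F.k i)).filter (fun j => j % 2 = 1)).image (F.x i)

/-- even-position internal vertices -/
noncomputable def eV (i : Fin F.m) : Finset V :=
  ((Finset.Icc 1 (F.k i)).filter (fun j => j % 2 = 0)).image (F.x i)

noncomputable def Oi (i : Fin F.m) : Finset (Finset V) :=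
  (sjComponents C).filter (fun D => D ⊆ F.oV i)

noncomputable def Ei (i : Fin F.m) : Finset (Finset V) :=
  (sjComponents C).filter (fun D => D ⊆ F.eV i)

noncomputable def Wp (i : Fin F.m) : Finset (Finset V) :=
  (sjComponents C).filter
    (fun D => D = {F.w, F.x i 2} ∨ D = {F.w, F.x i (F.k i - 1)})

noncomputable def Sp : Finset (Finset V) :=
  (sjComponents C).filter
    (fun D => F.w ∉ D ∧ (∀ z ∈ D, F.G.Adj F.w z) ∧ ∀ i, ¬ D ⊆ F.X i)

lemma mem_oV {i : Fin F.m} {z : V} :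
    z ∈ F.oV i ↔ ∃ j, 1 ≤ j ∧ j ≤ F.k i ∧ j % 2 = 1 ∧ z = F.x i j := by
  constructor
  · intro h
    obtain ⟨j, hj, rfl⟩ := Finset.mem_image.1 h
    obtain ⟨hj1, hj2⟩ := Finset.mem_filter.1 hj
    exact ⟨j, (Finset.mem_Icc.1 hj1).1, (Finset.mem_Icc.1 hj1).2, hj2, rfl⟩
  · rintro ⟨j, h1, h2, h3, rfl⟩
    exact Finset.mem_image.2 ⟨j, Finset.mem_filter.2 ⟨Finset.mem_Icc.2 ⟨h1, h2⟩, h3⟩, rfl⟩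

lemma mem_eV {i : Fin F.m} {z : V} :
    z ∈ F.eV i ↔ ∃ j, 1 ≤ j ∧ j ≤ F.k i ∧ j % 2 = 0 ∧ z = F.x i j := by
  constructor
  · intro h
    obtain ⟨j, hj, rfl⟩ := Finset.mem_image.1 h
    obtain ⟨hj1, hj2⟩ := Finset.mem_filter.1 hj
    exact ⟨j, (Finset.mem_Icc.1 hj1).1, (Finset.mem_Icc.1 hj1).2, hj2, rfl⟩
  · rintro ⟨j, h1, h2, h3, rfl⟩
    exact Finset.mem_image.2 ⟨j, Finset.mem_filter.2 ⟨Finset.mem_Icc.2 ⟨h1, h2⟩, h3⟩, rfl⟩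

lemma oV_subset_X (i : Fin F.m) : F.oV i ⊆ F.X i := by
  intro z hz
  obtain ⟨j, h1, h2, _, rfl⟩ := (F.mem_oV).1 hz
  exact F.mem_X.2 ⟨j, h1, h2, rfl⟩

lemma eV_subset_X (i : Fin F.m) : F.eV i ⊆ F.X i := by
  intro z hz
  obtain ⟨j, h1, h2, _, rfl⟩ := (F.mem_eV).1 hz
  exact F.mem_X.2 ⟨j, h1, h2, rfl⟩

lemma oV_eV_disjoint (i : Fin F.m) : Disjoint (F.oV i) (F.eV i) := by
  rw [Finset.disjoint_left]
  intro z hz hz'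
  obtain ⟨j, h1, h2, h3, rfl⟩ := (F.mem_oV).1 hz
  obtain ⟨j', h1', h2', h3', he⟩ := (F.mem_eV).1 hz'
  have := F.xinj h1 h2 h1' h2' he
  omega

variable {C}

lemma comps_nonempty (hC : F.G.IsCover C) {D : Finset V} (hD : D ∈ sjComponents C) :
    D.Nonempty := by
  rcases Finset.mem_union.1 hD with h | h
  · obtain ⟨p, hp, rfl⟩ := Finset.mem_image.1 h
    exact (hC.1 p hp).1
  · obtain ⟨p, hp, rfl⟩ := Finset.mem_image.1 h
    exact (hC.1 p hp).2

lemma mem_comps_fst {p : Finset V × Finset V} (hp : p ∈ C) : p.1 ∈ sjComponents C :=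
  Finset.mem_union.2 (Or.inl (Finset.mem_image.2 ⟨p, hp, rfl⟩))

lemma mem_comps_snd {p : Finset V × Finset V} (hp : p ∈ C) : p.2 ∈ sjComponents C :=
  Finset.mem_union.2 (Or.inr (Finset.mem_image.2 ⟨p, hp, rfl⟩))

lemma join_adj (hC : F.G.IsCover C) {p : Finset V × Finset V} (hp : p ∈ C)
    {a b : V} (ha : a ∈ p.1) (hb : b ∈ p.2) : F.G.Adj a b :=
  (hC.2 a b).2 ⟨p, hp, Or.inl ⟨ha, hb⟩⟩

/-- every internal edge is covered by a join with controlled sides -/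
lemma exists_edge_join (hC : F.G.IsCover C) (i : Fin F.m) (j : ℕ)
    (h1 : 1 ≤ j) (h2 : j + 1 ≤ F.k i) :
    ∃ A B, A ∈ sjComponents C ∧ B ∈ sjComponents C ∧
      F.x i j ∈ A ∧ F.x i (j+1) ∈ B ∧ (∀ a ∈ A, ∀ b ∈ B, F.G.Adj a b) := by
  have hadj := F.adj_step h1 h2
  obtain ⟨p, hp, hor⟩ := (hC.2 _ _).1 hadj
  rcases hor with ⟨hu, hv⟩ | ⟨hu, hv⟩
  · exact ⟨p.1, p.2, mem_comps_fst hp, mem_comps_snd hp, hu, hv,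
      fun a ha b hb => F.join_adj hC hp ha hb⟩
  · exact ⟨p.2, p.1, mem_comps_snd hp, mem_comps_fst hp, hu, hv,
      fun a ha b hb => F.adj_symm (F.join_adj hC hp hb ha)⟩

/-- classification of a join side containing `w`, opposite `x i 1` -/
lemma wedge_aux1 (hC : F.G.IsCover C) (i : Fin F.m) {A B : Finset V}
    (hwA : F.w ∈ A) (hxB : F.x i 1 ∈ B)
    (hcr : ∀ a ∈ A, ∀ b ∈ B, F.G.Adj a b) :
    (A = {F.w} ∧ F.w ∉ B ∧ (∀ z ∈ B, F.G.Adj F.w z)) ∨ A = {F.w, F.x i 2} := by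
  have hk := F.hk2 i
  by_cases hA1 : ∀ a ∈ A, a = F.w
  · left
    refine ⟨Finset.Subset.antisymm (fun a ha => Finset.mem_singleton.2 (hA1 a ha))
      (Finset.singleton_subset_iff.2 hwA), ?_, fun z hz => hcr _ hwA _ hz⟩
    intro hwB
    exact F.noloop _ (hcr _ hwA _ hwB)
  · right
    push_neg at hA1
    obtain ⟨z, hzA, hzw⟩ := hA1
    have hz2 : z = F.x i 2 := by
      rcases F.adj_elim le_rfl (by omega) (hcr _ hzA _ hxB) with ⟨h, _⟩ | ⟨q, hq1, hq2, rfl, hq⟩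
      · exact absurd h hzw
      · have : q = 2 := by omega
        rw [this]
    apply Finset.Subset.antisymm
    · intro a ha
      rcases F.adj_elim le_rfl (by omega) (hcr _ ha _ hxB) with ⟨h, _⟩ | ⟨q, hq1, hq2, rfl, hq⟩
      · simp [h]
      · have : q = 2 := by omega
        rw [this]; simp
    · intro a ha
      rcases Finset.mem_insert.1 ha with rfl | ha
      · exact hwA
      · rw [Finset.mem_singleton.1 ha, ← hz2]; exact hzA

/-- classification of a join side containing `w`, opposite `x i (k i)` -/
lemma wedge_auxk (hC : F.G.IsCover C) (i : Fin F.m) {A B : Finset V}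
    (hwA : F.w ∈ A) (hxB : F.x i (F.k i) ∈ B)
    (hcr : ∀ a ∈ A, ∀ b ∈ B, F.G.Adj a b) :
    (A = {F.w} ∧ F.w ∉ B ∧ (∀ z ∈ B, F.G.Adj F.w z)) ∨ A = {F.w, F.x i (F.k i - 1)} := by
  have hk := F.hk2 i
  by_cases hA1 : ∀ a ∈ A, a = F.w
  · left
    refine ⟨Finset.Subset.antisymm (fun a ha => Finset.mem_singleton.2 (hA1 a ha))
      (Finset.singleton_subset_iff.2 hwA), ?_, fun z hz => hcr _ hwA _ hz⟩
    intro hwB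
    exact F.noloop _ (hcr _ hwA _ hwB)
  · right
    push_neg at hA1
    obtain ⟨z, hzA, hzw⟩ := hA1
    have hz2 : z = F.x i (F.k i - 1) := by
      rcases F.adj_elim (by omega) le_rfl (hcr _ hzA _ hxB) with ⟨h, _⟩ | ⟨q, hq1, hq2, rfl, hq⟩
      · exact absurd h hzw
      · have : q = F.k i - 1 := by omega
        rw [this]
    apply Finset.Subset.antisymm
    · intro a ha
      rcases F.adj_elim (by omega) le_rfl (hcr _ ha _ hxB) with ⟨h, _⟩ | ⟨q, hq1, hq2, rfl, hq⟩
      · simp [h]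
      · have : q = F.k i - 1 := by omega
        rw [this]; simp
    · intro a ha
      rcases Finset.mem_insert.1 ha with rfl | ha
      · exact hwA
      · rw [Finset.mem_singleton.1 ha, ← hz2]; exact hzA

/-- structure of joins covering the w-edge at `x i 1` -/
lemma wedge1 (hC : F.G.IsCover C) (i : Fin F.m) :
    ({F.w} ∈ sjComponents C ∧
      ∃ B ∈ sjComponents C, F.x i 1 ∈ B ∧ F.w ∉ B ∧ ∀ z ∈ B, F.G.Adj F.w z) ∨
    {F.w, F.x i 2} ∈ sjComponents C := by
  obtain ⟨p, hp, hor⟩ := (hC.2 _ _).1 (F.adj_w1 i)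
  rcases hor with ⟨hu, hv⟩ | ⟨hu, hv⟩
  · rcases F.wedge_aux1 hC i hu hv (fun a ha b hb => F.join_adj hC hp ha hb) with
      ⟨hA, hwB, hBadj⟩ | hA
    · exact Or.inl ⟨hA ▸ mem_comps_fst hp, p.2, mem_comps_snd hp, hv, hwB, hBadj⟩
    · exact Or.inr (hA ▸ mem_comps_fst hp)
  · rcases F.wedge_aux1 hC i hu hv
        (fun a ha b hb => F.adj_symm (F.join_adj hC hp hb ha)) with
      ⟨hA, hwB, hBadj⟩ | hA
    · exact Or.inl ⟨hA ▸ mem_comps_snd hp, p.1, mem_comps_fst hp, hv, hwB, hBadj⟩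
    · exact Or.inr (hA ▸ mem_comps_snd hp)

/-- structure of joins covering the w-edge at `x i (k i)` -/
lemma wedgek (hC : F.G.IsCover C) (i : Fin F.m) :
    ({F.w} ∈ sjComponents C ∧
      ∃ B ∈ sjComponents C, F.x i (F.k i) ∈ B ∧ F.w ∉ B ∧ ∀ z ∈ B, F.G.Adj F.w z) ∨
    {F.w, F.x i (F.k i - 1)} ∈ sjComponents C := by
  obtain ⟨p, hp, hor⟩ := (hC.2 _ _).1 (F.adj_wk i)
  rcases hor with ⟨hu, hv⟩ | ⟨hu, hv⟩
  · rcases F.wedge_auxk hC i hu hv (fun a ha b hb => F.join_adj hC hp ha hb) with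
      ⟨hA, hwB, hBadj⟩ | hA
    · exact Or.inl ⟨hA ▸ mem_comps_fst hp, p.2, mem_comps_snd hp, hv, hwB, hBadj⟩
    · exact Or.inr (hA ▸ mem_comps_fst hp)
  · rcases F.wedge_auxk hC i hu hv
        (fun a ha b hb => F.adj_symm (F.join_adj hC hp hb ha)) with
      ⟨hA, hwB, hBadj⟩ | hA
    · exact Or.inl ⟨hA ▸ mem_comps_snd hp, p.1, mem_comps_fst hp, hv, hwB, hBadj⟩
    · exact Or.inr (hA ▸ mem_comps_snd hp)

end Cover
end Fl
end Stmt19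
open LoopGraph Finset
namespace Stmt19
namespace Fl
open scoped Classical
set_option linter.unusedSectionVars false
set_option linter.unusedVariables false

variable {V : Type*} [Fintype V] [DecidableEq V] (F : Fl V)
variable {C : Finset (Finset V × Finset V)}

lemma wpair_inj {i i' : Fin F.m} {a b : ℕ} (ha1 : 1 ≤ a) (ha2 : a ≤ F.k i)
    (hb1 : 1 ≤ b) (hb2 : b ≤ F.k i')
    (h : ({F.w, F.x i a} : Finset V) = {F.w, F.x i' b}) : i = i' ∧ a = b := by
  have hx : F.x i a ∈ ({F.w, F.x i' b} : Finset V) := h ▸ (by simp)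
  rcases Finset.mem_insert.1 hx with he | he
  · exact absurd he (F.xw ha1 ha2)
  · exact F.xinj ha1 ha2 hb1 hb2 (Finset.mem_singleton.1 he)

lemma Wp_mem_w {i : Fin F.m} {D : Finset V} (h : D ∈ F.Wp C i) : F.w ∈ D := by
  rcases (Finset.mem_filter.1 h).2 with rfl | rfl <;> simp

lemma Oi_subset_X {i : Fin F.m} {D : Finset V} (h : D ∈ F.Oi C i) : D ⊆ F.X i :=
  fun z hz => F.oV_subset_X i ((Finset.mem_filter.1 h).2 hz)

lemma Ei_subset_X {i : Fin F.m} {D : Finset V} (h : D ∈ F.Ei C i) : D ⊆ F.X i :=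
  fun z hz => F.eV_subset_X i ((Finset.mem_filter.1 h).2 hz)

lemma OE_not_w {i : Fin F.m} {D : Finset V} (h : D ⊆ F.X i) : F.w ∉ D :=
  fun hw => F.w_not_mem_X i (h hw)

lemma global_count (hC : F.G.IsCover C) :
    (∑ i, ((F.Oi C i).card + (F.Ei C i).card + (F.Wp C i).card))
      + (F.Sp C).card + (if {F.w} ∈ sjComponents C then 1 else 0)
      ≤ (sjComponents C).card := by
  classical
  set U1 : Fin F.m → Finset (Finset V) := fun i => F.Oi C i ∪ F.Ei C i ∪ F.Wp C i with hU1
  -- inner cards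
  have hOE : ∀ i : Fin F.m, Disjoint (F.Oi C i) (F.Ei C i) := by
    intro i
    rw [Finset.disjoint_left]
    intro D hDo hDe
    obtain ⟨z, hz⟩ := F.comps_nonempty hC (Finset.mem_filter.1 hDo).1
    exact Finset.disjoint_left.1 (F.oV_eV_disjoint i)
      ((Finset.mem_filter.1 hDo).2 hz) ((Finset.mem_filter.1 hDe).2 hz)
  have hOEWp : ∀ i : Fin F.m, Disjoint (F.Oi C i ∪ F.Ei C i) (F.Wp C i) := by
    intro i
    rw [Finset.disjoint_left]
    intro D hD hDw
    have hw := F.Wp_mem_w hDw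
    rcases Finset.mem_union.1 hD with h | h
    · exact F.OE_not_w (F.Oi_subset_X h) hw
    · exact F.OE_not_w (F.Ei_subset_X h) hw
  have hcard1 : ∀ i : Fin F.m, (U1 i).card
      = (F.Oi C i).card + (F.Ei C i).card + (F.Wp C i).card := by
    intro i
    rw [hU1]
    rw [Finset.card_union_of_disjoint (hOEWp i), Finset.card_union_of_disjoint (hOE i)]
  -- pairwise disjoint across cycles
  have hU1disj : ∀ i : Fin F.m, ∀ i' : Fin F.m, i ≠ i' → Disjoint (U1 i) (U1 i') := by
    intro i i' hne
    rw [Finset.disjoint_left]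
    intro D hD hD'
    have hins : ∀ {ii : Fin F.m}, D ∈ U1 ii →
        (D ⊆ F.X ii ∧ D.Nonempty) ∨ (∃ a, 1 ≤ a ∧ a ≤ F.k ii ∧ D = {F.w, F.x ii a}) := by
      intro ii hDi
      rcases Finset.mem_union.1 hDi with h | h
      · rcases Finset.mem_union.1 h with h' | h'
        · exact Or.inl ⟨F.Oi_subset_X h', F.comps_nonempty hC (Finset.mem_filter.1 h').1⟩
        · exact Or.inl ⟨F.Ei_subset_X h', F.comps_nonempty hC (Finset.mem_filter.1 h').1⟩
      · have hk := F.hk2 ii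
        rcases (Finset.mem_filter.1 h).2 with rfl | rfl
        · exact Or.inr ⟨2, by omega, by omega, rfl⟩
        · exact Or.inr ⟨F.k ii - 1, by omega, by omega, rfl⟩
    rcases hins hD with ⟨hsub, ⟨z, hz⟩⟩ | ⟨a, ha1, ha2, rfl⟩
    · rcases hins hD' with ⟨hsub', _⟩ | ⟨a, ha1, ha2, rfl⟩
      · exact Finset.disjoint_left.1 (F.X_disjoint hne) (hsub hz) (hsub' hz)
      · exact F.OE_not_w hsub (by simp)
    · rcases hins hD' with ⟨hsub', _⟩ | ⟨b, hb1, hb2, heq⟩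
      · exact F.OE_not_w hsub' (by simp)
      · exact hne (F.wpair_inj ha1 ha2 hb1 hb2 heq).1
  set U : Finset (Finset V) := Finset.univ.biUnion U1 with hU
  have hcardU : U.card = ∑ i, ((F.Oi C i).card + (F.Ei C i).card + (F.Wp C i).card) := by
    rw [hU, Finset.card_biUnion (fun i _ i' _ h => hU1disj i i' h)]
    exact Finset.sum_congr rfl fun i _ => hcard1 i
  have hUSp : Disjoint U (F.Sp C) := by
    rw [Finset.disjoint_left]
    intro D hD hDs
    obtain ⟨i, _, hDi⟩ := Finset.mem_biUnion.1 hD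
    obtain ⟨hw, _, hnX⟩ := (Finset.mem_filter.1 hDs).2
    rcases Finset.mem_union.1 hDi with h | h
    · rcases Finset.mem_union.1 h with h' | h'
      · exact hnX i (F.Oi_subset_X h')
      · exact hnX i (F.Ei_subset_X h')
    · exact hw (F.Wp_mem_w h)
  set U2 : Finset (Finset V) := U ∪ F.Sp C with hU2
  have hcardU2 : U2.card = U.card + (F.Sp C).card := Finset.card_union_of_disjoint hUSp
  set W3 : Finset (Finset V) :=
    if ({F.w} : Finset V) ∈ sjComponents C then {({F.w} : Finset V)} else ∅ with hW3
  have hU2W : Disjoint U2 W3 := by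
    rw [Finset.disjoint_left]
    intro D hD hDw
    have hDeq : D = {F.w} := by
      rw [hW3] at hDw
      split at hDw
      · exact Finset.mem_singleton.1 hDw
      · exact absurd hDw (Finset.notMem_empty _)
    subst hDeq
    rcases Finset.mem_union.1 hD with h | h
    · obtain ⟨i, _, hDi⟩ := Finset.mem_biUnion.1 h
      rcases Finset.mem_union.1 hDi with h' | h'
      · rcases Finset.mem_union.1 h' with h'' | h''
        · exact F.OE_not_w (F.Oi_subset_X h'') (by simp)
        · exact F.OE_not_w (F.Ei_subset_X h'') (by simp)
      · have hk := F.hk2 i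
        rcases (Finset.mem_filter.1 h').2 with heq | heq
        · have : F.x i 2 ∈ ({F.w} : Finset V) := heq ▸ (by simp)
          exact F.xw (i := i) (j := 2) (by omega) (by omega) (Finset.mem_singleton.1 this)
        · have : F.x i (F.k i - 1) ∈ ({F.w} : Finset V) := heq ▸ (by simp)
          exact F.xw (i := i) (j := F.k i - 1) (by omega) (by omega)
            (Finset.mem_singleton.1 this)
    · exact (Finset.mem_filter.1 h).2.1 (by simp)
  have hsub : U2 ∪ W3 ⊆ sjComponents C := by
    intro D hD
    rcases Finset.mem_union.1 hD with h | h
    · rcases Finset.mem_union.1 h with h' | h'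
      · obtain ⟨i, _, hDi⟩ := Finset.mem_biUnion.1 h'
        rcases Finset.mem_union.1 hDi with h'' | h''
        · rcases Finset.mem_union.1 h'' with h3 | h3
          · exact (Finset.mem_filter.1 h3).1
          · exact (Finset.mem_filter.1 h3).1
        · exact (Finset.mem_filter.1 h'').1
      · exact (Finset.mem_filter.1 h').1
    · rw [hW3] at h
      split at h
      · rwa [Finset.mem_singleton.1 h]
      · exact absurd h (Finset.notMem_empty _)
  have hW3card : W3.card = if ({F.w} : Finset V) ∈ sjComponents C then 1 else 0 := by
    rw [hW3]; split <;> simp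
  calc (∑ i, ((F.Oi C i).card + (F.Ei C i).card + (F.Wp C i).card))
      + (F.Sp C).card + (if {F.w} ∈ sjComponents C then 1 else 0)
      = (U2 ∪ W3).card := by
        rw [Finset.card_union_of_disjoint hU2W, hcardU2, hcardU, hW3card]
    _ ≤ (sjComponents C).card := Finset.card_le_card hsub
end Fl
end Stmt19
open LoopGraph Finset
namespace Stmt19

section Abstract
variable {α β : Type*} [DecidableEq α] [DecidableEq β]

lemma count_abstract {S : Finset α} {T : Finset β} {g : α → β}
    (hmem : ∀ j ∈ S, g j ∈ T)
    (hfib : ∀ D ∈ T, (S.filter (fun j => g j = D)).card ≤ 2) :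
    S.card ≤ 2 * T.card := by
  rw [Finset.card_eq_sum_card_fiberwise hmem]
  calc ∑ D ∈ T, (S.filter (fun j => g j = D)).card
      ≤ ∑ _D ∈ T, 2 := Finset.sum_le_sum hfib
    _ = 2 * T.card := by rw [Finset.sum_const, smul_eq_mul, mul_comm]

lemma count_abstract_corr {S : Finset α} {T : Finset β} {g : α → β} {s0 : β} {c : ℕ}
    (hmem : ∀ j ∈ S, g j ∈ T)
    (hfib : ∀ D ∈ T, (S.filter (fun j => g j = D)).card ≤ 2)
    (hs0 : s0 ∈ T) (hfib0 : (S.filter (fun j => g j = s0)).card + c ≤ 2) :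
    S.card + c ≤ 2 * T.card := by
  rw [Finset.card_eq_sum_card_fiberwise hmem]
  have hsplit : ∑ D ∈ T, (S.filter (fun j => g j = D)).card
      = ∑ D ∈ T.erase s0, (S.filter (fun j => g j = D)).card
        + (S.filter (fun j => g j = s0)).card := by
    rw [Finset.sum_erase_add _ _ hs0]
  have h1 : ∑ D ∈ T.erase s0, (S.filter (fun j => g j = D)).card ≤ 2 * (T.card - 1) := by
    calc ∑ D ∈ T.erase s0, (S.filter (fun j => g j = D)).card
        ≤ ∑ _D ∈ T.erase s0, 2 :=
          Finset.sum_le_sum fun D hD => hfib D (Finset.mem_of_mem_erase hD)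
      _ = 2 * (T.erase s0).card := by rw [Finset.sum_const, smul_eq_mul, mul_comm]
      _ = 2 * (T.card - 1) := by rw [Finset.card_erase_of_mem hs0]
  have hT1 : 1 ≤ T.card := Finset.card_pos.2 ⟨s0, hs0⟩
  omega

end Abstract

namespace Fl
open scoped Classical
set_option linter.unusedSectionVars false
set_option linter.unusedVariables false

variable {V : Type*} [Fintype V] [DecidableEq V] (F : Fl V)
variable {C : Finset (Finset V × Finset V)}

/-- edge index set of cycle `i` -/
noncomputable def Ed (i : Fin F.m) : Finset ℕ := Finset.Icc 1 (F.k i - 1)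

section ClassCount

variable {V : Type*} [Fintype V] [DecidableEq V]

/-- any non-exceptional component lands in the parity class, in a window -/
lemma class_window (F : Fl V) (i : Fin F.m) (par : ℕ) (hpar : par ≤ 1)
    (ι π : ℕ → ℕ)
    (hιπ : ∀ j, (ι j = j ∧ π j = j + 1) ∨ (ι j = j + 1 ∧ π j = j))
    (M : ℕ → Finset V)
    (hsub : ∀ j ∈ F.Ed i, ∀ z ∈ M j, F.G.Adj z (F.x i (π j)))
    (hπpar : ∀ j ∈ F.Ed i, (π j) % 2 ≠ par) :
    ∀ j ∈ F.Ed i, F.w ∉ M j → ∀ z ∈ M j,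
    ∃ q, 1 ≤ q ∧ q ≤ F.k i ∧ q % 2 = par ∧ z = F.x i q ∧ (q + 1 = π j ∨ q = π j + 1) := by
  intro j hj hw z hz
  have hk := F.hk2 i
  have hjj := Finset.mem_Icc.1 hj
  have hπj : 1 ≤ π j ∧ π j ≤ F.k i := by rcases hιπ j with ⟨h1, h2⟩ | ⟨h1, h2⟩ <;> omega
  rcases F.adj_elim hπj.1 hπj.2 (hsub j hj z hz) with ⟨rfl, _⟩ | ⟨q, hq1, hq2, rfl, hq⟩
  · exact absurd hz hw
  · have hp := hπpar j hj
    exact ⟨q, hq1, hq2, by omega, rfl, hq⟩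

lemma class_fiber2 (F : Fl V) (i : Fin F.m) (par : ℕ) (hpar : par ≤ 1)
    (ι π : ℕ → ℕ)
    (hιπ : ∀ j, (ι j = j ∧ π j = j + 1) ∨ (ι j = j + 1 ∧ π j = j))
    (M : ℕ → Finset V)
    (hx : ∀ j ∈ F.Ed i, F.x i (ι j) ∈ M j)
    (hsub : ∀ j ∈ F.Ed i, ∀ z ∈ M j, F.G.Adj z (F.x i (π j)))
    (hπpar : ∀ j ∈ F.Ed i, (π j) % 2 ≠ par) :
    ∀ j ∈ F.Ed i, ∀ j' ∈ F.Ed i, F.w ∉ M j → F.w ∉ M j' →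
    M j = M j' → j' = j ∨ j' = j + 1 ∨ j = j' + 1 := by
  intro j hj j' hj' hw hw' he
  have hk := F.hk2 i
  have hjj := Finset.mem_Icc.1 hj
  have hjj' := Finset.mem_Icc.1 hj'
  have hι : ∀ jj ∈ F.Ed i, 1 ≤ ι jj ∧ ι jj ≤ F.k i := by
    intro jj hjjm
    have := Finset.mem_Icc.1 hjjm
    rcases hιπ jj with ⟨h1, _⟩ | ⟨h1, _⟩ <;> omega
  have h1 : F.x i (ι j) ∈ M j' := he ▸ hx j hj
  obtain ⟨q, hq1, hq2, _, heq, hqr⟩ :=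
    F.class_window i par hpar ι π hιπ M hsub hπpar j' hj' hw' _ h1
  obtain ⟨_, hq⟩ := F.xinj (hι j hj).1 (hι j hj).2 hq1 hq2 heq
  have h2 : F.x i (ι j') ∈ M j := he ▸ hx j' hj'
  obtain ⟨q', hq1', hq2', _, heq', hqr'⟩ :=
    F.class_window i par hpar ι π hιπ M hsub hπpar j hj hw _ h2
  obtain ⟨_, hq'⟩ := F.xinj (hι j' hj').1 (hι j' hj').2 hq1' hq2' heq'
  rcases hιπ j with ⟨ha1, ha2⟩ | ⟨ha1, ha2⟩ <;> rcases hιπ j' with ⟨hb1, hb2⟩ | ⟨hb1, hb2⟩ <;>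
    omega

lemma class_main (F : Fl V) {C : Finset (Finset V × Finset V)} (i : Fin F.m) (par : ℕ)
    (hpar : par ≤ 1) (ι π : ℕ → ℕ)
    (hιπ : ∀ j, (ι j = j ∧ π j = j + 1) ∨ (ι j = j + 1 ∧ π j = j))
    (M : ℕ → Finset V)
    (hmem : ∀ j ∈ F.Ed i, M j ∈ sjComponents C)
    (hx : ∀ j ∈ F.Ed i, F.x i (ι j) ∈ M j)
    (hsub : ∀ j ∈ F.Ed i, ∀ z ∈ M j, F.G.Adj z (F.x i (π j)))
    (oVset : Finset V)
    (hoV : ∀ z : V, z ∈ oVset ↔ ∃ q, 1 ≤ q ∧ q ≤ F.k i ∧ q % 2 = par ∧ z = F.x i q)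
    (hπpar : ∀ j ∈ F.Ed i, (π j) % 2 ≠ par) :
    (((F.Ed i).filter (fun j => F.w ∉ M j)).card
        ≤ 2 * ((sjComponents C).filter (fun D => D ⊆ oVset)).card) ∧
    (∀ q, (q = 1 ∨ q = F.k i) →
      ({F.x i q} : Finset V) ∈ (sjComponents C).filter (fun D => D ⊆ oVset) →
      ((F.Ed i).filter (fun j => F.w ∉ M j)).card + 1
        ≤ 2 * ((sjComponents C).filter (fun D => D ⊆ oVset)).card) ∧
    (({F.x i 1, F.x i (F.k i)} : Finset V) ∈ (sjComponents C).filter (fun D => D ⊆ oVset) →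
      4 ≤ F.k i →
      ((F.Ed i).filter (fun j => F.w ∉ M j)).card + 2
        ≤ 2 * ((sjComponents C).filter (fun D => D ⊆ oVset)).card) := by
  classical
  set T := (sjComponents C).filter (fun D => D ⊆ oVset) with hT
  set S := (F.Ed i).filter (fun j => F.w ∉ M j) with hS
  have hk := F.hk2 i
  have hSmem : ∀ j ∈ S, M j ∈ T := by
    intro j hj
    obtain ⟨hj1, hj2⟩ := Finset.mem_filter.1 hj
    refine Finset.mem_filter.2 ⟨hmem j hj1, ?_⟩
    intro z hz
    obtain ⟨q, h1, h2, h3, rfl, _⟩ :=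
      F.class_window i par hpar ι π hιπ M hsub hπpar j hj1 hj2 z hz
    exact (hoV _).2 ⟨q, h1, h2, h3, rfl⟩
  have hfib : ∀ D ∈ T, (S.filter (fun j => M j = D)).card ≤ 2 := by
    intro D hD
    by_contra hcon
    push_neg at hcon
    obtain ⟨a, ha, b, hb, c, hc, hab, hac, hbc⟩ := Finset.two_lt_card.1 hcon
    have hmf : ∀ {u}, u ∈ (S.filter (fun j => M j = D)) →
        u ∈ F.Ed i ∧ F.w ∉ M u ∧ M u = D := by
      intro u hu
      obtain ⟨hu1, hu2⟩ := Finset.mem_filter.1 hu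
      obtain ⟨hu3, hu4⟩ := Finset.mem_filter.1 hu1
      exact ⟨hu3, hu4, hu2⟩
    obtain ⟨ha1, ha2, ha3⟩ := hmf ha
    obtain ⟨hb1, hb2, hb3⟩ := hmf hb
    obtain ⟨hc1, hc2, hc3⟩ := hmf hc
    have h1 := F.class_fiber2 i par hpar ι π hιπ M hx hsub hπpar a ha1 b hb1 ha2 hb2
      (ha3.trans hb3.symm)
    have h2 := F.class_fiber2 i par hpar ι π hιπ M hx hsub hπpar a ha1 c hc1 ha2 hc2
      (ha3.trans hc3.symm)
    have h3 := F.class_fiber2 i par hpar ι π hιπ M hx hsub hπpar b hb1 c hc1 hb2 hc2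
      (hb3.trans hc3.symm)
    omega
  refine ⟨count_abstract hSmem hfib, ?_, ?_⟩
  · intro q hq hs0
    refine count_abstract_corr hSmem hfib hs0 ?_
    have hle : (S.filter (fun j => M j = {F.x i q})).card ≤ 1 := by
      apply Finset.card_le_one.2
      intro u hu v hv
      have hmf : ∀ {z}, z ∈ (S.filter (fun j => M j = ({F.x i q} : Finset V))) →
          z = q ∨ z + 1 = q := by
        intro z hz
        obtain ⟨hz1, hz2⟩ := Finset.mem_filter.1 hz
        obtain ⟨hz3, hz4⟩ := Finset.mem_filter.1 hz1
        have hmem' : F.x i (ι z) ∈ ({F.x i q} : Finset V) := hz2 ▸ hx z hz3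
        have hzz := Finset.mem_Icc.1 hz3
        have hι : 1 ≤ ι z ∧ ι z ≤ F.k i := by rcases hιπ z with ⟨h1, _⟩ | ⟨h1, _⟩ <;> omega
        have := F.xinj hι.1 hι.2 (by omega) (by omega) (Finset.mem_singleton.1 hmem')
        rcases hιπ z with ⟨h1, _⟩ | ⟨h1, _⟩ <;> omega
      have h1 := hmf hu
      have h2 := hmf hv
      have hu1 := Finset.mem_Icc.1 (Finset.mem_filter.1 (Finset.mem_filter.1 hu).1).1
      have hv1 := Finset.mem_Icc.1 (Finset.mem_filter.1 (Finset.mem_filter.1 hv).1).1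
      omega
    omega
  · intro hs0 hk4
    refine count_abstract_corr hSmem hfib hs0 ?_
    have hze : (S.filter (fun j => M j = {F.x i 1, F.x i (F.k i)})).card = 0 := by
      rw [Finset.card_eq_zero]
      apply Finset.eq_empty_of_forall_notMem
      intro z hz
      obtain ⟨hz1, hz2⟩ := Finset.mem_filter.1 hz
      obtain ⟨hz3, hz4⟩ := Finset.mem_filter.1 hz1
      have h1 : F.x i 1 ∈ M z := hz2 ▸ (by simp)
      have hkk : F.x i (F.k i) ∈ M z := hz2 ▸ (by
        apply Finset.mem_insert.2; right; exact Finset.mem_singleton_self _)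
      obtain ⟨q, hq1, hq2, _, heq, hqr⟩ :=
        F.class_window i par hpar ι π hιπ M hsub hπpar z hz3 hz4 _ h1
      obtain ⟨q', hq1', hq2', _, heq', hqr'⟩ :=
        F.class_window i par hpar ι π hιπ M hsub hπpar z hz3 hz4 _ hkk
      have e1 := F.xinj (by omega : 1 ≤ (1:ℕ)) (by omega) hq1 hq2 heq
      have e2 := F.xinj (by omega : 1 ≤ F.k i) (by omega) hq1' hq2' heq'
      omega
    omega

end ClassCount
end Fl
end Stmt19
namespace Stmt19
namespace Fl
open LoopGraph Finset
open scoped Classical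
set_option linter.unusedSectionVars false
set_option linter.unusedVariables false

variable {V : Type*} [Fintype V] [DecidableEq V] (F : Fl V)

lemma adj_xw_elim {i : Fin F.m} {q : ℕ} (hq1 : 1 ≤ q) (hq2 : q ≤ F.k i)
    (h : F.G.Adj (F.x i q) F.w) : q = 1 ∨ q = F.k i := by
  obtain ⟨i', hcase⟩ := F.adj_w_elim h
  have hk' := F.hk2 i'
  rcases hcase with he | he
  · exact Or.inl (F.xinj hq1 hq2 le_rfl (by omega) he).2
  · obtain ⟨rfl, h2⟩ := F.xinj hq1 hq2 (by omega) le_rfl he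
    exact Or.inr h2

lemma card_Ed (i : Fin F.m) : (F.Ed i).card = F.k i - 1 := by
  have := F.hk2 i
  rw [Ed, Nat.card_Icc]
  omega

lemma one_mem_Ed (i : Fin F.m) : 1 ∈ F.Ed i := by
  have := F.hk2 i
  rw [Ed, Finset.mem_Icc]
  omega

lemma kminus_mem_Ed (i : Fin F.m) : F.k i - 1 ∈ F.Ed i := by
  have := F.hk2 i
  rw [Ed, Finset.mem_Icc]
  omega

/-- exceptional (w-containing) components are W-pairs, located at the ends -/
lemma class_exc (i : Fin F.m)
    (ι π : ℕ → ℕ)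
    (hιπ : ∀ j, (ι j = j ∧ π j = j + 1) ∨ (ι j = j + 1 ∧ π j = j))
    (M : ℕ → Finset V)
    (hx : ∀ j ∈ F.Ed i, F.x i (ι j) ∈ M j)
    (hsub : ∀ j ∈ F.Ed i, ∀ z ∈ M j, F.G.Adj z (F.x i (π j))) :
    ∀ j ∈ F.Ed i, F.w ∈ M j →
      (j = 1 ∧ π j = 1 ∧ M j = {F.w, F.x i 2}) ∨
      (j = F.k i - 1 ∧ π j = F.k i ∧ M j = {F.w, F.x i (F.k i - 1)}) := by
  intro j hj hw
  have hk := F.hk2 i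
  have hjj := Finset.mem_Icc.1 hj
  have hπj : 1 ≤ π j ∧ π j ≤ F.k i := by rcases hιπ j with ⟨h1, h2⟩ | ⟨h1, h2⟩ <;> omega
  rcases F.adj_elim hπj.1 hπj.2 (hsub j hj _ hw) with ⟨_, hcase⟩ | ⟨q, hq1, hq2, heq, _⟩
  swap
  · exact absurd heq.symm (F.xw hq1 hq2)
  rcases hcase with hπ1 | hπk
  · -- π j = 1, so j = 1, ι j = 2
    have hj1 : j = 1 ∧ ι j = 2 := by rcases hιπ j with ⟨h1, h2⟩ | ⟨h1, h2⟩ <;> omega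
    left
    refine ⟨hj1.1, hπ1, Finset.Subset.antisymm ?_ ?_⟩
    · intro z hz
      rcases F.adj_elim hπj.1 hπj.2 (hsub j hj _ hz) with ⟨rfl, _⟩ | ⟨q, hq1, hq2, rfl, hq⟩
      · simp
      · have : q = 2 := by omega
        subst this
        simp
    · intro z hz
      rcases Finset.mem_insert.1 hz with rfl | hz
      · exact hw
      · rw [Finset.mem_singleton.1 hz, ← hj1.2]
        exact hx j hj
  · -- π j = k i, so j = k i - 1, ι j = k i - 1
    have hj1 : j = F.k i - 1 ∧ ι j = F.k i - 1 := by
      rcases hιπ j with ⟨h1, h2⟩ | ⟨h1, h2⟩ <;> omega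
    right
    refine ⟨hj1.1, hπk, Finset.Subset.antisymm ?_ ?_⟩
    · intro z hz
      rcases F.adj_elim hπj.1 hπj.2 (hsub j hj _ hz) with ⟨rfl, _⟩ | ⟨q, hq1, hq2, rfl, hq⟩
      · simp
      · have : q = F.k i - 1 := by omega
        subst this
        simp
    · intro z hz
      rcases Finset.mem_insert.1 hz with rfl | hz
      · exact hw
      · rw [Finset.mem_singleton.1 hz, ← hj1.2]
        exact hx j hj

/-- when the partner side is exceptional, this side is an endpoint singleton -/
lemma class_refine (i : Fin F.m) {ιm πm : ℕ}
    (h1 : 1 ≤ πm) (h2 : πm ≤ F.k i) (h3 : 1 ≤ ιm) (h4 : ιm ≤ F.k i)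
    (hpm : ιm + 1 = πm ∨ ιm = πm + 1) (hend : ιm = 1 ∨ ιm = F.k i) (hk3 : F.k i ≠ 3)
    {M : Finset V} (hxm : F.x i ιm ∈ M) (hwM : F.w ∉ M)
    (hsubm : ∀ z ∈ M, F.G.Adj z (F.x i πm)) (hadjw : ∀ a ∈ M, F.G.Adj a F.w) :
    M = {F.x i ιm} := by
  have hk := F.hk2 i
  apply Finset.Subset.antisymm
  · intro z hz
    rcases F.adj_elim h1 h2 (hsubm z hz) with ⟨rfl, _⟩ | ⟨q, hq1, hq2, rfl, hq⟩
    · exact absurd hz hwM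
    · have hqe := F.adj_xw_elim hq1 hq2 (hadjw _ hz)
      have : q = ιm := by omega
      simp [this]
  · intro z hz
    rw [Finset.mem_singleton.1 hz]
    exact hxm

end Fl
end Stmt19
namespace Stmt19
namespace Fl
open LoopGraph Finset
open scoped Classical
set_option linter.unusedSectionVars false
set_option linter.unusedVariables false

variable {V : Type*} [Fintype V] [DecidableEq V] (F : Fl V)
variable {C : Finset (Finset V × Finset V)}


lemma arith_even {k a b t so se xo xe : ℕ} (hk : 2 ≤ k) (hkev : k % 2 = 0)
    (h1 : so ≤ 2*a) (h2 : se ≤ 2*b) (h3 : xo + so = k-1) (h4 : xe + se = k-1)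
    (h5 : xo ≤ 1) (h6 : xe ≤ 1)
    (h9 : 1 ≤ xe → 1 ≤ t) (h10 : 1 ≤ xo → 1 ≤ t)
    (h11 : 1 ≤ xe → so + 1 ≤ 2*a) (h12 : 1 ≤ xo → se + 1 ≤ 2*b) :
    a + b ≥ k ∨ (a + b ≥ k - 1 ∧ 1 ≤ t) := by
  rcases Nat.eq_zero_or_pos xe with he | he
  · rcases Nat.eq_zero_or_pos xo with ho | ho
    · left; omega
    · have := h10 ho
      have := h12 ho
      right; omega
  · have := h9 he
    have := h11 he
    rcases Nat.eq_zero_or_pos xo with ho | ho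
    · right; omega
    · have := h12 ho
      right; omega

lemma arith_odd5 {k a b so se xe : ℕ} (hk5 : 5 ≤ k) (hkodd : k % 2 = 1)
    (h1 : so ≤ 2*a) (h2 : se ≤ 2*b) (h3 : so = k-1) (h4 : xe + se = k-1) (h6 : xe ≤ 2)
    (h11 : 1 ≤ xe → so + 1 ≤ 2*a) : a + b ≥ k - 1 := by
  rcases Nat.eq_zero_or_pos xe with he | he
  · omega
  · have := h11 he
    omega

lemma arith_3 {a b t so se xe : ℕ} (h1 : so ≤ 2*a) (h2 : se ≤ 2*b) (h3 : so = 2)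
    (h4 : xe + se = 2) (h9 : 1 ≤ xe → 1 ≤ t) :
    a + b ≥ 2 ∨ (a + b ≥ 1 ∧ 1 ≤ t) := by
  rcases Nat.eq_zero_or_pos xe with he | he
  · left; omega
  · exact Or.inr ⟨by omega, h9 he⟩

lemma arith_free {k a b so se : ℕ} (hk5 : 5 ≤ k) (hkodd : k % 2 = 1)
    (h2 : se ≤ 2*b) (h3 : so = k-1) (h4 : se = k-1)
    (hc : so + 1 ≤ 2*a) (hab : a + b ≤ k - 1) : False := by
  omega

set_option maxHeartbeats 1000000 in
lemma cycle_main (hC : F.G.IsCover C) (i : Fin F.m) :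
    ((F.k i) % 2 = 0 →
      (F.Oi C i).card + (F.Ei C i).card ≥ F.k i ∨
      ((F.Oi C i).card + (F.Ei C i).card ≥ F.k i - 1 ∧ 1 ≤ (F.Wp C i).card)) ∧
    ((F.k i) % 2 = 1 → 5 ≤ F.k i →
      (F.Oi C i).card + (F.Ei C i).card ≥ F.k i - 1) ∧
    (F.k i = 3 →
      (F.Oi C i).card + (F.Ei C i).card ≥ 2 ∨
      ((F.Oi C i).card + (F.Ei C i).card ≥ 1 ∧ 1 ≤ (F.Wp C i).card)) ∧
    ((F.k i) % 2 = 1 → 5 ≤ F.k i → (F.Wp C i).card = 0 →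
      (F.Oi C i).card + (F.Ei C i).card ≤ F.k i - 1 →
      ({F.w} ∈ sjComponents C ∧ (F.Sp C).Nonempty)) := by
  classical
  have hk2 := F.hk2 i
  -- chosen joins for the internal edges
  have hch : ∀ j : ℕ, ∃ AB : Finset V × Finset V, 1 ≤ j → j + 1 ≤ F.k i →
      AB.1 ∈ sjComponents C ∧ AB.2 ∈ sjComponents C ∧ F.x i j ∈ AB.1 ∧
      F.x i (j+1) ∈ AB.2 ∧ ∀ a ∈ AB.1, ∀ b ∈ AB.2, F.G.Adj a b := by
    intro j
    by_cases hj : 1 ≤ j ∧ j + 1 ≤ F.k i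
    · obtain ⟨A, B, h1, h2, h3, h4, h5⟩ := F.exists_edge_join hC i j hj.1 hj.2
      exact ⟨(A, B), fun _ _ => ⟨h1, h2, h3, h4, h5⟩⟩
    · exact ⟨(∅, ∅), fun h1 h2 => absurd ⟨h1, h2⟩ hj⟩
  choose AB hAB using hch
  set ιo : ℕ → ℕ := fun j => if j % 2 = 1 then j else j + 1 with hιo
  set πo : ℕ → ℕ := fun j => if j % 2 = 1 then j + 1 else j with hπo
  set Mo : ℕ → Finset V := fun j => if j % 2 = 1 then (AB j).1 else (AB j).2 with hMo
  set Me : ℕ → Finset V := fun j => if j % 2 = 1 then (AB j).2 else (AB j).1 with hMe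
  have hEd : ∀ j ∈ F.Ed i, 1 ≤ j ∧ j + 1 ≤ F.k i := by
    intro j hj
    have := Finset.mem_Icc.1 hj
    omega
  have hιπo : ∀ j, (ιo j = j ∧ πo j = j + 1) ∨ (ιo j = j + 1 ∧ πo j = j) := by
    intro j
    by_cases h : j % 2 = 1
    · left; simp [hιo, hπo, h]
    · right; simp [hιo, hπo, h]
  have hιπe : ∀ j, (πo j = j ∧ ιo j = j + 1) ∨ (πo j = j + 1 ∧ ιo j = j) := by
    intro j
    rcases hιπo j with ⟨h1, h2⟩ | ⟨h1, h2⟩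
    · exact Or.inr ⟨h2, h1⟩
    · exact Or.inl ⟨h2, h1⟩
  have hfacts : ∀ j ∈ F.Ed i,
      Mo j ∈ sjComponents C ∧ Me j ∈ sjComponents C ∧
      F.x i (ιo j) ∈ Mo j ∧ F.x i (πo j) ∈ Me j ∧
      (∀ z ∈ Mo j, F.G.Adj z (F.x i (πo j))) ∧
      (∀ z ∈ Me j, F.G.Adj z (F.x i (ιo j))) ∧
      (∀ a ∈ Mo j, ∀ b ∈ Me j, F.G.Adj a b) := by
    intro j hj
    obtain ⟨hj1, hj2⟩ := hEd j hj
    obtain ⟨m1, m2, m3, m4, m5⟩ := hAB j hj1 hj2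
    by_cases h : j % 2 = 1
    · simp only [hMo, hMe, hιo, hπo, if_pos h]
      exact ⟨m1, m2, m3, m4, fun z hz => m5 z hz _ m4,
        fun z hz => F.adj_symm (m5 _ m3 z hz), fun a ha b hb => m5 a ha b hb⟩
    · simp only [hMo, hMe, hιo, hπo, if_neg h]
      exact ⟨m2, m1, m4, m3, fun z hz => F.adj_symm (m5 _ m3 z hz),
        fun z hz => m5 z hz _ m4, fun a ha b hb => F.adj_symm (m5 b hb a ha)⟩
  have hmemo : ∀ j ∈ F.Ed i, Mo j ∈ sjComponents C := fun j hj => (hfacts j hj).1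
  have hmeme : ∀ j ∈ F.Ed i, Me j ∈ sjComponents C := fun j hj => (hfacts j hj).2.1
  have hxo : ∀ j ∈ F.Ed i, F.x i (ιo j) ∈ Mo j := fun j hj => (hfacts j hj).2.2.1
  have hxe : ∀ j ∈ F.Ed i, F.x i (πo j) ∈ Me j := fun j hj => (hfacts j hj).2.2.2.1
  have hsubo : ∀ j ∈ F.Ed i, ∀ z ∈ Mo j, F.G.Adj z (F.x i (πo j)) :=
    fun j hj => (hfacts j hj).2.2.2.2.1
  have hsube : ∀ j ∈ F.Ed i, ∀ z ∈ Me j, F.G.Adj z (F.x i (ιo j)) :=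
    fun j hj => (hfacts j hj).2.2.2.2.2.1
  have hcross : ∀ j ∈ F.Ed i, ∀ a ∈ Mo j, ∀ b ∈ Me j, F.G.Adj a b :=
    fun j hj => (hfacts j hj).2.2.2.2.2.2
  have hπparo : ∀ j ∈ F.Ed i, πo j % 2 ≠ 1 := by
    intro j hj
    by_cases h : j % 2 = 1 <;> simp [hπo, h] <;> omega
  have hπpare : ∀ j ∈ F.Ed i, ιo j % 2 ≠ 0 := by
    intro j hj
    by_cases h : j % 2 = 1 <;> simp [hιo, h] <;> omega
  have CMo := F.class_main (C := C) i 1 (by omega) ιo πo hιπo Mo hmemo hxo hsubo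
    (F.oV i) (fun z => F.mem_oV) hπparo
  have CMe := F.class_main (C := C) i 0 (by omega) πo ιo hιπe Me hmeme hxe hsube
    (F.eV i) (fun z => F.mem_eV) hπpare
  have hOieq : F.Oi C i = (sjComponents C).filter (fun D => D ⊆ F.oV i) := rfl
  have hEieq : F.Ei C i = (sjComponents C).filter (fun D => D ⊆ F.eV i) := rfl
  rw [← hOieq] at CMo
  rw [← hEieq] at CMe
  set a := (F.Oi C i).card with ha
  set b := (F.Ei C i).card with hb
  set t := (F.Wp C i).card with ht
  set So := (F.Ed i).filter (fun j => F.w ∉ Mo j) with hSo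
  set Se := (F.Ed i).filter (fun j => F.w ∉ Me j) with hSe
  set Xo := (F.Ed i).filter (fun j => F.w ∈ Mo j) with hXo
  set Xe := (F.Ed i).filter (fun j => F.w ∈ Me j) with hXe
  have hsplito : Xo.card + So.card = F.k i - 1 := by
    rw [hXo, hSo, Finset.card_filter_add_card_filter_not, F.card_Ed i]
  have hsplite : Xe.card + Se.card = F.k i - 1 := by
    rw [hXe, hSe, Finset.card_filter_add_card_filter_not, F.card_Ed i]
  -- exception analysis
  have hexc_o := F.class_exc i ιo πo hιπo Mo hxo hsubo
  have hexc_e := F.class_exc i πo ιo hιπe Me hxe hsube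
  have hXo_loc : ∀ j ∈ Xo, j = F.k i - 1 ∧ (F.k i) % 2 = 0 ∧
      ({F.w, F.x i (F.k i - 1)} : Finset V) ∈ sjComponents C ∧ F.w ∈ Mo j := by
    intro j hj
    obtain ⟨hj1, hj2⟩ := Finset.mem_filter.1 hj
    rcases hexc_o j hj1 hj2 with ⟨hje, hπ, hM⟩ | ⟨hje, hπ, hM⟩
    · exact absurd hπ (by have := hπparo j hj1; omega)
    · have hkev : (F.k i) % 2 = 0 := by
        have := hπparo j hj1
        omega
      exact ⟨hje, hkev, hM ▸ hmemo j hj1, hj2⟩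
  have hXe_loc : ∀ j ∈ Xe, F.w ∈ Me j ∧
      ((j = 1 ∧ ({F.w, F.x i 2} : Finset V) ∈ sjComponents C) ∨
       (j = F.k i - 1 ∧ (F.k i) % 2 = 1 ∧
         ({F.w, F.x i (F.k i - 1)} : Finset V) ∈ sjComponents C)) := by
    intro j hj
    obtain ⟨hj1, hj2⟩ := Finset.mem_filter.1 hj
    rcases hexc_e j hj1 hj2 with ⟨hje, hπ, hM⟩ | ⟨hje, hπ, hM⟩
    · exact ⟨hj2, Or.inl ⟨hje, hM ▸ hmeme j hj1⟩⟩
    · have hkodd : (F.k i) % 2 = 1 := by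
        have := hπpare j hj1
        omega
      exact ⟨hj2, Or.inr ⟨hje, hkodd, hM ▸ hmeme j hj1⟩⟩
  have hXocard : Xo.card ≤ 1 := by
    apply Finset.card_le_one.2
    intro u hu v hv
    rw [(hXo_loc u hu).1, (hXo_loc v hv).1]
  have hXodd : (F.k i) % 2 = 1 → Xo.card = 0 := by
    intro hodd
    rw [Finset.card_eq_zero]
    apply Finset.eq_empty_of_forall_notMem
    intro j hj
    have := (hXo_loc j hj).2.1
    omega
  have hXe_sub : Xe ⊆ {1, F.k i - 1} := by
    intro j hj
    rcases (hXe_loc j hj).2 with ⟨hje, _⟩ | ⟨hje, _⟩ <;> simp [hje]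
  have hXecard : Xe.card ≤ 2 := le_trans (Finset.card_le_card hXe_sub)
    (le_trans (Finset.card_insert_le _ _) (by simp))
  have hXeven : (F.k i) % 2 = 0 → Xe.card ≤ 1 := by
    intro hev
    apply Finset.card_le_one.2
    intro u hu v hv
    have h1 := (hXe_loc u hu).2
    have h2 := (hXe_loc v hv).2
    rcases h1 with ⟨he1, _⟩ | ⟨_, ho, _⟩
    · rcases h2 with ⟨he2, _⟩ | ⟨_, ho, _⟩
      · rw [he1, he2]
      · omega
    · omega
  -- w-pair memberships give t ≥ 1
  have hWp1 : ({F.w, F.x i 2} : Finset V) ∈ sjComponents C → 1 ≤ t := by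
    intro h
    exact Finset.card_pos.2 ⟨_, Finset.mem_filter.2 ⟨h, Or.inl rfl⟩⟩
  have hWp2 : ({F.w, F.x i (F.k i - 1)} : Finset V) ∈ sjComponents C → 1 ≤ t := by
    intro h
    exact Finset.card_pos.2 ⟨_, Finset.mem_filter.2 ⟨h, Or.inr rfl⟩⟩
  -- no j is exceptional on both sides
  have hnoboth : ∀ j ∈ F.Ed i, ¬ (F.w ∈ Mo j ∧ F.w ∈ Me j) := by
    rintro j hj ⟨h1, h2⟩
    exact F.noloop _ (hcross j hj _ h1 _ h2)
  -- refinements: singleton endpoint components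
  have hsing1 : F.k i ≠ 3 → 1 ∈ Xe → ({F.x i 1} : Finset V) ∈ F.Oi C i := by
    intro hk3 h1
    have h1' := Finset.mem_filter.1 h1
    have hM : Mo 1 = {F.x i 1} := by
      have hι1 : ιo 1 = 1 := by simp [hιo]
      have hπ1 : πo 1 = 2 := by simp [hπo]
      refine F.class_refine i (ιm := 1) (πm := 2) (by omega) (by omega) (by omega)
        (by omega) (by omega) (Or.inl rfl) hk3 ?_ ?_ ?_ ?_
      · have := hxo 1 h1'.1; rwa [hι1] at this
      · intro hw
        exact hnoboth 1 h1'.1 ⟨hw, h1'.2⟩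
      · have := hsubo 1 h1'.1; rwa [hπ1] at this
      · intro z hz
        exact F.adj_symm (F.adj_symm (hcross 1 h1'.1 z hz _ h1'.2))
    rw [← hM]
    refine Finset.mem_filter.2 ⟨hmemo 1 h1'.1, ?_⟩
    rw [hM]
    intro z hz
    rw [Finset.mem_singleton.1 hz]
    exact F.mem_oV.2 ⟨1, le_rfl, by omega, by omega, rfl⟩
  have hsingk_e : F.k i ≠ 3 → (F.k i - 1) ∈ Xe → (F.k i) % 2 = 1 →
      ({F.x i (F.k i)} : Finset V) ∈ F.Oi C i := by
    intro hk3 h1 hkodd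
    have h1' := Finset.mem_filter.1 h1
    have hι1 : ιo (F.k i - 1) = F.k i := by
      have : (F.k i - 1) % 2 = 0 := by omega
      simp [hιo, this]
      omega
    have hπ1 : πo (F.k i - 1) = F.k i - 1 := by
      have : (F.k i - 1) % 2 = 0 := by omega
      simp [hπo, this]
    have hM : Mo (F.k i - 1) = {F.x i (F.k i)} := by
      refine F.class_refine i (ιm := F.k i) (πm := F.k i - 1) (by omega) (by omega)
        (by omega) (by omega) (by omega) (Or.inr rfl) hk3 ?_ ?_ ?_ ?_
      · have := hxo _ h1'.1; rwa [hι1] at this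
      · intro hw
        exact hnoboth _ h1'.1 ⟨hw, h1'.2⟩
      · have := hsubo _ h1'.1; rwa [hπ1] at this
      · intro z hz
        exact F.adj_symm (F.adj_symm (hcross _ h1'.1 z hz _ h1'.2))
    rw [← hM]
    refine Finset.mem_filter.2 ⟨hmemo _ h1'.1, ?_⟩
    rw [hM]
    intro z hz
    rw [Finset.mem_singleton.1 hz]
    exact F.mem_oV.2 ⟨F.k i, by omega, le_rfl, by omega, rfl⟩
  have hsingk_o : F.k i ≠ 3 → (F.k i - 1) ∈ Xo → (F.k i) % 2 = 0 →
      ({F.x i (F.k i)} : Finset V) ∈ F.Ei C i := by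
    intro hk3 h1 hkev
    have h1' := Finset.mem_filter.1 h1
    have hι1 : πo (F.k i - 1) = F.k i := by
      have : (F.k i - 1) % 2 = 1 := by omega
      simp [hπo, this]
      omega
    have hπ1 : ιo (F.k i - 1) = F.k i - 1 := by
      have : (F.k i - 1) % 2 = 1 := by omega
      simp [hιo, this]
    have hM : Me (F.k i - 1) = {F.x i (F.k i)} := by
      refine F.class_refine i (ιm := F.k i) (πm := F.k i - 1) (by omega) (by omega)
        (by omega) (by omega) (by omega) (Or.inr rfl) hk3 ?_ ?_ ?_ ?_
      · have := hxe _ h1'.1; rwa [hι1] at this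
      · intro hw
        exact hnoboth _ h1'.1 ⟨h1'.2, hw⟩
      · have := hsube _ h1'.1; rwa [hπ1] at this
      · intro z hz
        exact F.adj_symm (hcross _ h1'.1 _ h1'.2 z hz)
    rw [← hM]
    refine Finset.mem_filter.2 ⟨hmeme _ h1'.1, ?_⟩
    rw [hM]
    intro z hz
    rw [Finset.mem_singleton.1 hz]
    exact F.mem_eV.2 ⟨F.k i, by omega, le_rfl, by omega, rfl⟩
  -- basic count bounds
  have hsoa : So.card ≤ 2 * a := CMo.1
  have hseb : Se.card ≤ 2 * b := CMe.1
  -- corrections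
  have hcorr1 : F.k i ≠ 3 → 1 ∈ Xe → So.card + 1 ≤ 2 * a := by
    intro hk3 h1
    exact CMo.2.1 1 (Or.inl rfl) (hsing1 hk3 h1)
  have hcorrk : F.k i ≠ 3 → (F.k i - 1) ∈ Xe → (F.k i) % 2 = 1 → So.card + 1 ≤ 2 * a := by
    intro hk3 h1 hodd
    exact CMo.2.1 (F.k i) (Or.inr rfl) (hsingk_e hk3 h1 hodd)
  have hcorre : F.k i ≠ 3 → (F.k i - 1) ∈ Xo → (F.k i) % 2 = 0 → Se.card + 1 ≤ 2 * b := by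
    intro hk3 h1 hev
    exact CMe.2.1 (F.k i) (Or.inr rfl) (hsingk_o hk3 h1 hev)
  -- Xe membership extraction
  have hXe_mem_t : Xe.card ≥ 1 → 1 ≤ t := by
    intro hge
    obtain ⟨j, hj⟩ := Finset.card_pos.1 hge
    rcases (hXe_loc j hj).2 with ⟨_, hmem⟩ | ⟨_, _, hmem⟩
    · exact hWp1 hmem
    · exact hWp2 hmem
  have hXo_mem_t : Xo.card ≥ 1 → 1 ≤ t := by
    intro hge
    obtain ⟨j, hj⟩ := Finset.card_pos.1 hge
    exact hWp2 (hXo_loc j hj).2.2.1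
  have hXe_corr : F.k i ≠ 3 → Xe.card ≥ 1 → So.card + 1 ≤ 2 * a := by
    intro hk3 hge
    obtain ⟨j, hj⟩ := Finset.card_pos.1 hge
    rcases (hXe_loc j hj).2 with ⟨hje, _⟩ | ⟨hje, hodd, _⟩
    · exact hcorr1 hk3 (hje ▸ hj)
    · exact hcorrk hk3 (hje ▸ hj) hodd
  have hk3 : F.k i ≠ 3 ∨ F.k i = 3 := by omega
  have hXo_corr : F.k i ≠ 3 → (F.k i) % 2 = 0 → 1 ≤ Xo.card → Se.card + 1 ≤ 2 * b := by
    intro h3 hev hge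
    obtain ⟨j, hj⟩ := Finset.card_pos.1 hge
    exact hcorre h3 ((hXo_loc j hj).1 ▸ hj) hev
  refine ⟨?_, ?_, ?_, ?_⟩
  · -- k even
    intro hkev
    have hk3' : F.k i ≠ 3 := fun h => by rw [h] at hkev; exact absurd hkev (by norm_num)
    exact arith_even hk2 hkev hsoa hseb hsplito hsplite hXocard (hXeven hkev)
      (fun h => hXe_mem_t h) (fun h => hXo_mem_t h)
      (fun h => hXe_corr hk3' h) (fun h => hXo_corr hk3' hkev h)
  · -- k odd ≥ 5
    intro hkodd hk5
    have hk3' : F.k i ≠ 3 := by omega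
    have hxo0 := hXodd hkodd
    have hso := hsplito
    rw [hxo0, Nat.zero_add] at hso
    exact arith_odd5 hk5 hkodd hsoa hseb hso hsplite hXecard (fun h => hXe_corr hk3' h)
  · -- k = 3
    intro hk3'
    have hxo0 := hXodd (by rw [hk3'])
    have hso := hsplito
    rw [hxo0, Nat.zero_add, hk3'] at hso
    have hse := hsplite
    rw [hk3'] at hse
    exact arith_3 hsoa hseb hso hse (fun h => hXe_mem_t h)
  · -- the freeloader case
    intro hkodd hk5 ht0 hab
    have hk3' : F.k i ≠ 3 := by omega
    have hxo0 := hXodd hkodd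
    have hxe0 : Xe.card = 0 := by
      rcases Nat.eq_zero_or_pos Xe.card with h | h
      · exact h
      · exact absurd (ht0 ▸ hXe_mem_t h) (by norm_num)
    have hso := hsplito
    rw [hxo0, Nat.zero_add] at hso
    have hse := hsplite
    rw [hxe0, Nat.zero_add] at hse
    have hk4 : 4 ≤ F.k i := Nat.le_trans (by norm_num) hk5
    -- use the w-edge at x i 1
    rcases F.wedge1 hC i with ⟨hwmem, B, hB, hxB, hwB, hBadj⟩ | hpair
    · refine ⟨hwmem, ?_⟩
      by_cases hBX : ∀ i', ¬ B ⊆ F.X i'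
      · exact ⟨B, Finset.mem_filter.2 ⟨hB, hwB, hBadj, hBX⟩⟩
      · push_neg at hBX
        obtain ⟨i', hBi⟩ := hBX
        have hii : i' = i := by
          by_contra hne
          exact Finset.disjoint_left.1 (F.X_disjoint (Ne.symm hne))
            (F.mem_X.2 ⟨1, le_rfl, by omega, rfl⟩) (hBi hxB)
        rw [hii] at hBi
        have hBsub : B ⊆ ({F.x i 1, F.x i (F.k i)} : Finset V) := by
          intro z hz
          obtain ⟨q, hq1, hq2, rfl⟩ := F.mem_X.1 (hBi hz)
          rcases F.adj_xw_elim hq1 hq2 (F.adj_symm (hBadj _ hz)) with rfl | h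
          · simp
          · rw [h]
            exact Finset.mem_insert.2 (Or.inr (Finset.mem_singleton_self _))
        exfalso
        by_cases hkB : F.x i (F.k i) ∈ B
        · have hBeq : B = ({F.x i 1, F.x i (F.k i)} : Finset V) := by
            apply Finset.Subset.antisymm hBsub
            intro z hz
            rcases Finset.mem_insert.1 hz with rfl | hz
            · exact hxB
            · rw [Finset.mem_singleton.1 hz]
              exact hkB
          have hmemOi : ({F.x i 1, F.x i (F.k i)} : Finset V) ∈ F.Oi C i := by
            refine Finset.mem_filter.2 ⟨hBeq ▸ hB, ?_⟩
            intro z hz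
            rcases Finset.mem_insert.1 hz with rfl | hz
            · exact F.mem_oV.2 ⟨1, le_rfl, by omega, by omega, rfl⟩
            · rw [Finset.mem_singleton.1 hz]
              exact F.mem_oV.2 ⟨F.k i, by omega, le_rfl, by omega, rfl⟩
          have hcc := CMo.2.2 hmemOi hk4
          exact arith_free hk5 hkodd hseb hso hse
            (Nat.le_trans (Nat.add_le_add_left (by norm_num) _) hcc) hab
        · have hBeq : B = ({F.x i 1} : Finset V) := by
            apply Finset.Subset.antisymm
            · intro z hz
              rcases Finset.mem_insert.1 (hBsub hz) with rfl | hz'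
              · simp
              · exact absurd (Finset.mem_singleton.1 hz' ▸ hz) hkB
            · intro z hz
              rw [Finset.mem_singleton.1 hz]
              exact hxB
          have hmemOi : ({F.x i 1} : Finset V) ∈ F.Oi C i := by
            refine Finset.mem_filter.2 ⟨hBeq ▸ hB, ?_⟩
            intro z hz
            rw [Finset.mem_singleton.1 hz]
            exact F.mem_oV.2 ⟨1, le_rfl, by omega, by omega, rfl⟩
          have hcc := CMo.2.1 1 (Or.inl rfl) hmemOi
          exact arith_free hk5 hkodd hseb hso hse hcc hab
    · exact absurd (hWp1 hpair) (by rw [← ht] at *; omega)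

end Fl
end Stmt19
namespace Stmt19
namespace Fl
open LoopGraph Finset
open scoped Classical
set_option linter.unusedSectionVars false
set_option linter.unusedVariables false

variable {V : Type*} [Fintype V] [DecidableEq V] (F : Fl V)
variable {C : Finset (Finset V × Finset V)}

lemma wpair_full (hC : F.G.IsCover C) (i : Fin F.m) (hk3 : F.k i ≠ 3)
    (hw : ({F.w} : Finset V) ∉ sjComponents C) : 2 ≤ (F.Wp C i).card := by
  have hk := F.hk2 i
  have h1 : ({F.w, F.x i 2} : Finset V) ∈ sjComponents C := by
    rcases F.wedge1 hC i with ⟨hmem, _⟩ | h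
    · exact absurd hmem hw
    · exact h
  have h2 : ({F.w, F.x i (F.k i - 1)} : Finset V) ∈ sjComponents C := by
    rcases F.wedgek hC i with ⟨hmem, _⟩ | h
    · exact absurd hmem hw
    · exact h
  have hne : ({F.w, F.x i 2} : Finset V) ≠ {F.w, F.x i (F.k i - 1)} := by
    intro heq
    have := F.wpair_inj (i := i) (i' := i) (by omega) (by omega) (by omega) (by omega) heq
    omega
  exact Finset.one_lt_card.2 ⟨_, Finset.mem_filter.2 ⟨h1, Or.inl rfl⟩,
    _, Finset.mem_filter.2 ⟨h2, Or.inr rfl⟩, hne⟩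

set_option maxHeartbeats 1000000 in
lemma lower_bound (hC : F.G.IsCover C) :
    1 + ∑ i, F.k i ≤ (sjComponents C).card +
      (if (Finset.univ.filter fun i => F.k i % 2 = 1 ∧ F.k i ≠ 3).card
          + (Finset.univ.filter fun i => F.k i % 2 = 0).card = 0
       then (Finset.univ.filter fun i => F.k i = 3).card + 1
       else (Finset.univ.filter fun i => F.k i = 3).card
          + ((Finset.univ.filter fun i => F.k i % 2 = 1 ∧ F.k i ≠ 3).card - 1)) := by
  classical
  set cc : Fin F.m → ℕ := fun i => (F.Oi C i).card + (F.Ei C i).card + (F.Wp C i).card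
    with hcc
  set P4 : Finset (Fin F.m) := Finset.univ.filter (fun i => F.k i = 3) with hP4
  set Pe : Finset (Fin F.m) :=
    Finset.univ.filter (fun i => F.k i % 2 = 1 ∧ F.k i ≠ 3) with hPe
  set Po : Finset (Fin F.m) := Finset.univ.filter (fun i => F.k i % 2 = 0) with hPo
  have hsplit : ∀ g : Fin F.m → ℕ,
      ∑ i, g i = ∑ i ∈ P4, g i + ∑ i ∈ Pe, g i + ∑ i ∈ Po, g i := by
    intro g
    have e1 : ∑ i, g i
        = ∑ i ∈ Finset.univ.filter (fun i => F.k i = 3), g i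
          + ∑ i ∈ Finset.univ.filter (fun i => ¬ F.k i = 3), g i :=
      (Finset.sum_filter_add_sum_filter_not _ _ _).symm
    have e2 : ∑ i ∈ Finset.univ.filter (fun i => ¬ F.k i = 3), g i
        = ∑ i ∈ (Finset.univ.filter (fun i => ¬ F.k i = 3)).filter
            (fun i => F.k i % 2 = 1), g i
          + ∑ i ∈ (Finset.univ.filter (fun i => ¬ F.k i = 3)).filter
            (fun i => ¬ F.k i % 2 = 1), g i :=
      (Finset.sum_filter_add_sum_filter_not _ _ _).symm
    have e3 : (Finset.univ.filter (fun i => ¬ F.k i = 3)).filter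
        (fun i => F.k i % 2 = 1) = Pe := by
      rw [hPe, Finset.filter_filter]
      apply Finset.filter_congr
      intro i _
      constructor
      · rintro ⟨h1, h2⟩; exact ⟨h2, h1⟩
      · rintro ⟨h1, h2⟩; exact ⟨h2, h1⟩
    have e4 : (Finset.univ.filter (fun i => ¬ F.k i = 3)).filter
        (fun i => ¬ F.k i % 2 = 1) = Po := by
      rw [hPo, Finset.filter_filter]
      apply Finset.filter_congr
      intro i _
      constructor
      · rintro ⟨h1, h2⟩; omega
      · intro h; omega
    rw [e1, e2, e3, e4, hP4]
    ring
  have hglobal := F.global_count hC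
  have hwI : ∑ i, cc i + (F.Sp C).card + (if ({F.w} : Finset V) ∈ sjComponents C then 1 else 0)
      ≤ (sjComponents C).card := hglobal
  -- baseline bounds
  have hb4 : ∀ i ∈ P4, F.k i ≤ cc i + 1 := by
    intro i hi
    have hk3 : F.k i = 3 := (Finset.mem_filter.1 hi).2
    rcases (F.cycle_main hC i).2.2.1 hk3 with h | ⟨h1, h2⟩
    · simp only [hcc]; omega
    · simp only [hcc]; omega
  have hbo : ∀ i ∈ Po, F.k i ≤ cc i := by
    intro i hi
    have hkev : F.k i % 2 = 0 := (Finset.mem_filter.1 hi).2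
    rcases (F.cycle_main hC i).1 hkev with h | ⟨h1, h2⟩
    · simp only [hcc]; omega
    · simp only [hcc]; omega
  have hbe : ∀ i ∈ Pe, F.k i ≤ cc i + 1 := by
    intro i hi
    have hke := (Finset.mem_filter.1 hi).2
    have hk2 := F.hk2 i
    have h := (F.cycle_main hC i).2.1 hke.1 (by omega)
    simp only [hcc]; omega
  have hsum4 : ∑ i ∈ P4, F.k i ≤ ∑ i ∈ P4, cc i + P4.card := by
    calc ∑ i ∈ P4, F.k i ≤ ∑ i ∈ P4, (cc i + 1) := Finset.sum_le_sum hb4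
      _ = ∑ i ∈ P4, cc i + P4.card := by
          rw [Finset.sum_add_distrib, Finset.sum_const, smul_eq_mul, mul_one]
  have hsumo : ∑ i ∈ Po, F.k i ≤ ∑ i ∈ Po, cc i := Finset.sum_le_sum hbo
  have hsume : ∑ i ∈ Pe, F.k i ≤ ∑ i ∈ Pe, cc i + Pe.card := by
    calc ∑ i ∈ Pe, F.k i ≤ ∑ i ∈ Pe, (cc i + 1) := Finset.sum_le_sum hbe
      _ = ∑ i ∈ Pe, cc i + Pe.card := by
          rw [Finset.sum_add_distrib, Finset.sum_const, smul_eq_mul, mul_one]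
  by_cases hw : ({F.w} : Finset V) ∈ sjComponents C
  · rw [if_pos hw] at hwI
    by_cases hfree : ∃ i ∈ Pe, cc i ≤ F.k i - 1
    · -- a freeloading even cycle exists: there is a spanning E-set
      obtain ⟨i0, hi0, hfr⟩ := hfree
      have hke := (Finset.mem_filter.1 hi0).2
      have hk2 := F.hk2 i0
      have hk5 : 5 ≤ F.k i0 := by omega
      have hOE := (F.cycle_main hC i0).2.1 hke.1 hk5
      have ht0 : (F.Wp C i0).card = 0 := by simp only [hcc] at hfr; omega
      have hab : (F.Oi C i0).card + (F.Ei C i0).card ≤ F.k i0 - 1 := by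
        simp only [hcc] at hfr; omega
      obtain ⟨-, hSp⟩ := (F.cycle_main hC i0).2.2.2 hke.1 hk5 ht0 hab
      have hSp1 : 1 ≤ (F.Sp C).card := Finset.card_pos.2 hSp
      have hPe1 : 1 ≤ Pe.card := Finset.card_pos.2 ⟨i0, hi0⟩
      rw [if_neg (by omega : ¬ (Pe.card + Po.card = 0))]
      have hkk := hsplit (fun i => F.k i)
      have hcs := hsplit cc
      omega
    · push_neg at hfree
      have hbe' : ∀ i ∈ Pe, F.k i ≤ cc i := by
        intro i hi
        have := hfree i hi
        omega
      have hsume' : ∑ i ∈ Pe, F.k i ≤ ∑ i ∈ Pe, cc i := Finset.sum_le_sum hbe'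
      have hkk := hsplit (fun i => F.k i)
      have hcs := hsplit cc
      by_cases hcase : Pe.card + Po.card = 0
      · rw [if_pos hcase]; omega
      · rw [if_neg hcase]; omega
  · rw [if_neg hw] at hwI
    have hbo' : ∀ i ∈ Po, F.k i + 1 ≤ cc i := by
      intro i hi
      have hkev : F.k i % 2 = 0 := (Finset.mem_filter.1 hi).2
      have ht2 := F.wpair_full hC i (by omega) hw
      rcases (F.cycle_main hC i).1 hkev with h | ⟨h1, h2⟩
      · simp only [hcc]; omega
      · simp only [hcc]; omega
    have hbe' : ∀ i ∈ Pe, F.k i + 1 ≤ cc i := by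
      intro i hi
      have hke := (Finset.mem_filter.1 hi).2
      have hk2 := F.hk2 i
      have ht2 := F.wpair_full hC i hke.2 hw
      have h := (F.cycle_main hC i).2.1 hke.1 (by omega)
      simp only [hcc]; omega
    have hsumo' : ∑ i ∈ Po, (F.k i + 1) ≤ ∑ i ∈ Po, cc i := Finset.sum_le_sum hbo'
    have hsume' : ∑ i ∈ Pe, (F.k i + 1) ≤ ∑ i ∈ Pe, cc i := Finset.sum_le_sum hbe'
    rw [Finset.sum_add_distrib, Finset.sum_const, smul_eq_mul, mul_one] at hsumo' hsume'
    have hkk := hsplit (fun i => F.k i)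
    have hcs := hsplit cc
    by_cases hcase : Pe.card + Po.card = 0
    · rw [if_pos hcase]; omega
    · rw [if_neg hcase]; omega

end Fl
end Stmt19
namespace Stmt19
namespace Fl
open LoopGraph Finset
open scoped Classical
set_option linter.unusedSectionVars false
set_option linter.unusedVariables false

variable {V : Type*} [Fintype V] [DecidableEq V] (F : Fl V)

lemma cover4 (h3 : ∀ i, F.k i = 3) :
    ∃ CC : Finset (Finset V × Finset V), F.G.IsCover CC ∧
      (sjComponents CC).card ≤ 2 * F.m := by
  classical
  set CC : Finset (Finset V × Finset V) :=
    Finset.univ.image (fun i => (({F.w, F.x i 2} : Finset V),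
      ({F.x i 1, F.x i 3} : Finset V))) with hCC
  have hx3 : ∀ i, F.x i (F.len i - 1) = F.x i 3 := by
    intro i
    have : F.len i - 1 = 3 := h3 i
    rw [this]
  refine ⟨CC, ⟨?_, ?_⟩, ?_⟩
  · intro p hp
    obtain ⟨i, _, rfl⟩ := Finset.mem_image.1 hp
    exact ⟨⟨F.w, by simp⟩, ⟨F.x i 1, by simp⟩⟩
  · intro u v
    constructor
    · intro h
      obtain ⟨i, hc⟩ := (F.hadj u v).1 h
      have hki := h3 i
      refine ⟨(({F.w, F.x i 2} : Finset V), ({F.x i 1, F.x i 3} : Finset V)),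
        Finset.mem_image.2 ⟨i, Finset.mem_univ _, rfl⟩, ?_⟩
      rcases hc with (⟨rfl, rfl⟩ | ⟨rfl, rfl⟩) | (⟨rfl, he⟩ | ⟨rfl, he⟩) |
        ⟨j, hj1, hj2, (⟨rfl, rfl⟩ | ⟨rfl, rfl⟩)⟩
      · exact Or.inl ⟨by simp, by simp⟩
      · exact Or.inr ⟨by simp, by simp⟩
      · rw [he, hx3 i]
        exact Or.inl ⟨by simp, by simp⟩
      · rw [he, hx3 i]
        exact Or.inr ⟨by simp, by simp⟩
      · -- u = x i j, v = x i (j+1), j+1 ≤ len-1 = 3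
        have hj3 : j = 1 ∨ j = 2 := by
          have : F.len i - 1 = 3 := h3 i
          omega
        rcases hj3 with rfl | rfl
        · exact Or.inr ⟨by simp, by simp⟩
        · exact Or.inl ⟨by simp, by simp⟩
      · have hj3 : j = 1 ∨ j = 2 := by
          have : F.len i - 1 = 3 := h3 i
          omega
        rcases hj3 with rfl | rfl
        · exact Or.inl ⟨by simp, by simp⟩
        · exact Or.inr ⟨by simp, by simp⟩
    · rintro ⟨p, hp, hor⟩
      obtain ⟨i, _, rfl⟩ := Finset.mem_image.1 hp
      have hki := h3 i
      have hsound : ∀ a ∈ ({F.w, F.x i 2} : Finset V), ∀ b ∈ ({F.x i 1, F.x i 3} : Finset V),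
          F.G.Adj a b := by
        intro a ha b hb
        have hwk := F.adj_wk i
        rw [show F.k i = 3 from hki] at hwk
        rcases Finset.mem_insert.1 ha with rfl | ha
        · rcases Finset.mem_insert.1 hb with rfl | hb
          · exact F.adj_w1 i
          · rw [Finset.mem_singleton.1 hb]
            exact hwk
        · rw [Finset.mem_singleton.1 ha]
          rcases Finset.mem_insert.1 hb with rfl | hb
          · exact F.adj_symm (F.adj_step (i := i) le_rfl (by omega))
          · rw [Finset.mem_singleton.1 hb]
            exact F.adj_step (i := i) (by omega) (by omega)
      rcases hor with ⟨hu, hv⟩ | ⟨hu, hv⟩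
      · exact hsound u hu v hv
      · exact F.adj_symm (hsound v hv u hu)
  · rw [sjComponents]
    calc (CC.image Prod.fst ∪ CC.image Prod.snd).card
        ≤ (CC.image Prod.fst).card + (CC.image Prod.snd).card := Finset.card_union_le _ _
      _ ≤ CC.card + CC.card := by
          have h1 := Finset.card_image_le (s := CC) (f := Prod.fst)
          have h2 := Finset.card_image_le (s := CC) (f := Prod.snd)
          omega
      _ ≤ 2 * F.m := by
          have := Finset.card_image_le (s := (Finset.univ : Finset (Fin F.m)))
            (f := fun i => (({F.w, F.x i 2} : Finset V), ({F.x i 1, F.x i 3} : Finset V)))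
          rw [hCC]
          simp only [Finset.card_univ, Fintype.card_fin] at this ⊢
          omega

end Fl
end Stmt19
namespace Stmt19
namespace Fl
open LoopGraph Finset
open scoped Classical
set_option linter.unusedSectionVars false
set_option linter.unusedVariables false

variable {V : Type*} [Fintype V] [DecidableEq V] (F : Fl V)

set_option maxHeartbeats 2000000 in
lemma cover_gen :
    ∃ CC : Finset (Finset V × Finset V), F.G.IsCover CC ∧
      (sjComponents CC).card ≤
        1 + (∑ i ∈ Finset.univ.filter (fun i => F.k i % 2 = 0), F.k i)
          + 2 * (Finset.univ.filter (fun i => F.k i = 3)).card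
          + (∑ i ∈ Finset.univ.filter (fun i => F.k i % 2 = 1 ∧ F.k i ≠ 3), (F.k i - 1))
          + (if (Finset.univ.filter (fun i => F.k i % 2 = 1 ∧ F.k i ≠ 3)).card = 0
             then 0 else 1) := by
  classical
  set Po : Finset (Fin F.m) := Finset.univ.filter (fun i => F.k i % 2 = 0) with hPo
  set P4 : Finset (Fin F.m) := Finset.univ.filter (fun i => F.k i = 3) with hP4
  set Pe : Finset (Fin F.m) :=
    Finset.univ.filter (fun i => F.k i % 2 = 1 ∧ F.k i ≠ 3) with hPe
  set L : Finset V := Pe.biUnion (fun i => ({F.x i 1, F.x i (F.k i)} : Finset V)) with hL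
  set Jodd : Finset (Finset V × Finset V) := Po.biUnion (fun i =>
    ((Finset.Icc 1 (F.k i - 1)).image
      (fun j => (({F.x i j} : Finset V), ({F.x i (j+1)} : Finset V))))
    ∪ {(({F.w} : Finset V), ({F.x i 1} : Finset V)),
       (({F.w} : Finset V), ({F.x i (F.k i)} : Finset V))}) with hJodd
  set J4 : Finset (Finset V × Finset V) := P4.image
    (fun i => (({F.w, F.x i 2} : Finset V), ({F.x i 1, F.x i 3} : Finset V))) with hJ4d
  set Je : Finset (Finset V × Finset V) := Pe.biUnion (fun i =>
    (Finset.Icc 1 ((F.k i - 1)/2)).image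
      (fun t => (({F.x i (2*t)} : Finset V),
        ({F.x i (2*t-1), F.x i (2*t+1)} : Finset V)))) with hJe
  set Jl : Finset (Finset V × Finset V) :=
    if Pe.card = 0 then ∅ else {(({F.w} : Finset V), L)} with hJl
  set CC := Jodd ∪ J4 ∪ Je ∪ Jl with hCCd
  -- membership constructors
  have hmemPo : ∀ i : Fin F.m, F.k i % 2 = 0 → i ∈ Po := by
    intro i h; rw [hPo]; exact Finset.mem_filter.2 ⟨Finset.mem_univ _, h⟩
  have hmemP4 : ∀ i : Fin F.m, F.k i = 3 → i ∈ P4 := by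
    intro i h; rw [hP4]; exact Finset.mem_filter.2 ⟨Finset.mem_univ _, h⟩
  have hmemPe : ∀ i : Fin F.m, F.k i % 2 = 1 → F.k i ≠ 3 → i ∈ Pe := by
    intro i h1 h2; rw [hPe]; exact Finset.mem_filter.2 ⟨Finset.mem_univ _, h1, h2⟩
  have hJo1 : ∀ i : Fin F.m, F.k i % 2 = 0 →
      ((({F.w} : Finset V), ({F.x i 1} : Finset V))) ∈ CC := by
    intro i h
    refine Finset.mem_union.2 (Or.inl (Finset.mem_union.2 (Or.inl (Finset.mem_union.2
      (Or.inl (Finset.mem_biUnion.2 ⟨i, hmemPo i h, ?_⟩))))))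
    exact Finset.mem_union.2 (Or.inr (by simp))
  have hJo2 : ∀ i : Fin F.m, F.k i % 2 = 0 →
      ((({F.w} : Finset V), ({F.x i (F.k i)} : Finset V))) ∈ CC := by
    intro i h
    refine Finset.mem_union.2 (Or.inl (Finset.mem_union.2 (Or.inl (Finset.mem_union.2
      (Or.inl (Finset.mem_biUnion.2 ⟨i, hmemPo i h, ?_⟩))))))
    exact Finset.mem_union.2 (Or.inr (by simp))
  have hJoc : ∀ (i : Fin F.m) (j : ℕ), F.k i % 2 = 0 → 1 ≤ j → j + 1 ≤ F.k i →
      ((({F.x i j} : Finset V), ({F.x i (j+1)} : Finset V))) ∈ CC := by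
    intro i j h h1 h2
    refine Finset.mem_union.2 (Or.inl (Finset.mem_union.2 (Or.inl (Finset.mem_union.2
      (Or.inl (Finset.mem_biUnion.2 ⟨i, hmemPo i h, ?_⟩))))))
    exact Finset.mem_union.2 (Or.inl (Finset.mem_image.2
      ⟨j, Finset.mem_Icc.2 ⟨h1, by omega⟩, rfl⟩))
  have hJ4 : ∀ i : Fin F.m, F.k i = 3 →
      ((({F.w, F.x i 2} : Finset V), ({F.x i 1, F.x i 3} : Finset V))) ∈ CC := by
    intro i h
    exact Finset.mem_union.2 (Or.inl (Finset.mem_union.2 (Or.inl (Finset.mem_union.2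
      (Or.inr (Finset.mem_image.2 ⟨i, hmemP4 i h, rfl⟩))))))
  have hJev : ∀ (i : Fin F.m) (t : ℕ), F.k i % 2 = 1 → F.k i ≠ 3 → 1 ≤ t →
      t ≤ (F.k i - 1)/2 →
      ((({F.x i (2*t)} : Finset V), ({F.x i (2*t-1), F.x i (2*t+1)} : Finset V))) ∈ CC := by
    intro i t h1 h2 ht1 ht2
    refine Finset.mem_union.2 (Or.inl (Finset.mem_union.2 (Or.inr ?_)))
    exact Finset.mem_biUnion.2 ⟨i, hmemPe i h1 h2, Finset.mem_image.2
      ⟨t, Finset.mem_Icc.2 ⟨ht1, ht2⟩, rfl⟩⟩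
  have hJlm : ∀ i : Fin F.m, F.k i % 2 = 1 → F.k i ≠ 3 →
      ((({F.w} : Finset V), L)) ∈ CC := by
    intro i h1 h2
    refine Finset.mem_union.2 (Or.inr ?_)
    rw [hJl, if_neg ?_]
    · exact Finset.mem_singleton_self _
    · intro hc
      exact absurd (hmemPe i h1 h2) (Finset.card_eq_zero.1 hc ▸ Finset.notMem_empty i)
  have hLmem : ∀ (i : Fin F.m) (q : ℕ), F.k i % 2 = 1 → F.k i ≠ 3 →
      (q = 1 ∨ q = F.k i) → F.x i q ∈ L := by
    intro i q h1 h2 hq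
    rw [hL]
    refine Finset.mem_biUnion.2 ⟨i, hmemPe i h1 h2, ?_⟩
    rcases hq with rfl | rfl
    · simp
    · simp
  refine ⟨CC, ⟨?_, ?_⟩, ?_⟩
  · -- nonemptiness of the sides
    intro p hp
    rw [hCCd] at hp
    rcases Finset.mem_union.1 hp with hp' | hp'
    swap
    · rw [hJl] at hp'
      split at hp'
      · exact absurd hp' (Finset.notMem_empty _)
      · rename_i hne
        rw [Finset.mem_singleton.1 hp']
        refine ⟨by simp, ?_⟩
        obtain ⟨i, hi⟩ := Finset.card_pos.1 (Nat.pos_of_ne_zero hne)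
        have hip := (Finset.mem_filter.1 hi).2
        exact ⟨F.x i 1, hLmem i 1 hip.1 hip.2 (Or.inl rfl)⟩
    rcases Finset.mem_union.1 hp' with hp'' | hp''
    swap
    · obtain ⟨i, hi, him⟩ := Finset.mem_biUnion.1 hp''
      obtain ⟨t, _, rfl⟩ := Finset.mem_image.1 him
      exact ⟨by simp, by simp⟩
    rcases Finset.mem_union.1 hp'' with hp3 | hp3
    · obtain ⟨i, hi, him⟩ := Finset.mem_biUnion.1 hp3
      rcases Finset.mem_union.1 him with h | h
      · obtain ⟨j, _, rfl⟩ := Finset.mem_image.1 h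
        exact ⟨by simp, by simp⟩
      · rcases Finset.mem_insert.1 h with rfl | h
        · exact ⟨by simp, by simp⟩
        · rw [Finset.mem_singleton.1 h]
          exact ⟨by simp, by simp⟩
    · obtain ⟨i, _, rfl⟩ := Finset.mem_image.1 hp3
      exact ⟨by simp, by simp⟩
  · -- the covering property
    intro u v
    have hkrel : ∀ i : Fin F.m, F.len i - 1 = F.k i := fun _ => rfl
    constructor
    · intro h
      obtain ⟨i, hc⟩ := (F.hadj u v).1 h
      have hk2 := F.hk2 i
      have htri : F.k i = 3 ∨ (F.k i % 2 = 1 ∧ F.k i ≠ 3) ∨ F.k i % 2 = 0 := by omega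
      rcases hc with (⟨rfl, rfl⟩ | ⟨rfl, rfl⟩) | (⟨rfl, he⟩ | ⟨rfl, he⟩) |
        ⟨j, hj1, hj2, (⟨rfl, rfl⟩ | ⟨rfl, rfl⟩)⟩
      · -- u = w, v = x i 1
        rcases htri with h3 | ⟨ho, hne⟩ | hev
        · exact ⟨_, hJ4 i h3, Or.inl ⟨by simp, by simp⟩⟩
        · exact ⟨_, hJlm i ho hne, Or.inl ⟨by simp, hLmem i 1 ho hne (Or.inl rfl)⟩⟩
        · exact ⟨_, hJo1 i hev, Or.inl ⟨by simp, by simp⟩⟩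
      · -- v = w, u = x i 1
        rcases htri with h3 | ⟨ho, hne⟩ | hev
        · exact ⟨_, hJ4 i h3, Or.inr ⟨by simp, by simp⟩⟩
        · exact ⟨_, hJlm i ho hne, Or.inr ⟨hLmem i 1 ho hne (Or.inl rfl), by simp⟩⟩
        · exact ⟨_, hJo1 i hev, Or.inr ⟨by simp, by simp⟩⟩
      · -- u = w, v = x i (len - 1)
        rw [hkrel i] at he
        subst he
        rcases htri with h3 | ⟨ho, hne⟩ | hev
        · rw [show F.k i = 3 from h3]
          exact ⟨_, hJ4 i h3, Or.inl ⟨by simp, by simp⟩⟩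
        · exact ⟨_, hJlm i ho hne, Or.inl ⟨by simp, hLmem i _ ho hne (Or.inr rfl)⟩⟩
        · exact ⟨_, hJo2 i hev, Or.inl ⟨by simp, by simp⟩⟩
      · -- v = w, u = x i (len - 1)
        rw [hkrel i] at he
        subst he
        rcases htri with h3 | ⟨ho, hne⟩ | hev
        · rw [show F.k i = 3 from h3]
          exact ⟨_, hJ4 i h3, Or.inr ⟨by simp, by simp⟩⟩
        · exact ⟨_, hJlm i ho hne, Or.inr ⟨hLmem i _ ho hne (Or.inr rfl), by simp⟩⟩
        · exact ⟨_, hJo2 i hev, Or.inr ⟨by simp, by simp⟩⟩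
      · -- u = x i j, v = x i (j+1)
        rw [hkrel i] at hj2
        rcases htri with h3 | ⟨ho, hne⟩ | hev
        · have : j = 1 ∨ j = 2 := by omega
          rcases this with rfl | rfl
          · exact ⟨_, hJ4 i h3, Or.inr ⟨by simp, by simp⟩⟩
          · exact ⟨_, hJ4 i h3, Or.inl ⟨by simp, by simp⟩⟩
        · by_cases hjo : j % 2 = 1
          · refine ⟨_, hJev i ((j+1)/2) ho hne (by omega) (by omega), Or.inr ⟨?_, ?_⟩⟩
            · have e1 : 2 * ((j+1)/2) - 1 = j := by omega
              rw [e1]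
              simp
            · have e2 : 2 * ((j+1)/2) = j + 1 := by omega
              rw [e2]
              simp
          · refine ⟨_, hJev i (j/2) ho hne (by omega) (by omega), Or.inl ⟨?_, ?_⟩⟩
            · have e1 : 2 * (j/2) = j := by omega
              rw [e1]
              simp
            · have e2 : 2 * (j/2) + 1 = j + 1 := by omega
              rw [e2]
              simp
        · exact ⟨_, hJoc i j hev hj1 hj2, Or.inl ⟨by simp, by simp⟩⟩
      · -- v = x i j, u = x i (j+1)
        rw [hkrel i] at hj2
        rcases htri with h3 | ⟨ho, hne⟩ | hev
        · have : j = 1 ∨ j = 2 := by omega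
          rcases this with rfl | rfl
          · exact ⟨_, hJ4 i h3, Or.inl ⟨by simp, by simp⟩⟩
          · exact ⟨_, hJ4 i h3, Or.inr ⟨by simp, by simp⟩⟩
        · by_cases hjo : j % 2 = 1
          · refine ⟨_, hJev i ((j+1)/2) ho hne (by omega) (by omega), Or.inl ⟨?_, ?_⟩⟩
            · have e2 : 2 * ((j+1)/2) = j + 1 := by omega
              rw [e2]
              simp
            · have e1 : 2 * ((j+1)/2) - 1 = j := by omega
              rw [e1]
              simp
          · refine ⟨_, hJev i (j/2) ho hne (by omega) (by omega), Or.inr ⟨?_, ?_⟩⟩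
            · have e2 : 2 * (j/2) + 1 = j + 1 := by omega
              rw [e2]
              simp
            · have e1 : 2 * (j/2) = j := by omega
              rw [e1]
              simp
        · exact ⟨_, hJoc i j hev hj1 hj2, Or.inr ⟨by simp, by simp⟩⟩
    · -- soundness
      rintro ⟨p, hp, hor⟩
      have hsound : ∀ a ∈ p.1, ∀ b ∈ p.2, F.G.Adj a b := by
        rw [hCCd] at hp
        rcases Finset.mem_union.1 hp with hp' | hp'
        swap
        · -- Jl
          rw [hJl] at hp'
          split at hp'
          · exact absurd hp' (Finset.notMem_empty _)
          · rw [Finset.mem_singleton.1 hp']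
            intro a ha b hb
            rw [Finset.mem_singleton.1 ha]
            rw [hL] at hb
            obtain ⟨i, hi, hbi⟩ := Finset.mem_biUnion.1 hb
            have hip := (Finset.mem_filter.1 hi).2
            have hk2 := F.hk2 i
            rcases Finset.mem_insert.1 hbi with rfl | hbi
            · exact F.adj_w1 i
            · rw [Finset.mem_singleton.1 hbi]
              exact F.adj_wk i
        rcases Finset.mem_union.1 hp' with hp'' | hp''
        swap
        · -- Je
          obtain ⟨i, hi, him⟩ := Finset.mem_biUnion.1 hp''
          obtain ⟨t, htm, rfl⟩ := Finset.mem_image.1 him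
          have hip := (Finset.mem_filter.1 hi).2
          have ht := Finset.mem_Icc.1 htm
          have hk2 := F.hk2 i
          intro a ha b hb
          rw [Finset.mem_singleton.1 ha]
          rcases Finset.mem_insert.1 hb with rfl | hb
          · have e1 : (2*t - 1) + 1 = 2*t := by omega
            exact F.adj_symm (e1 ▸ F.adj_step (i := i) (j := 2*t-1) (by omega) (by omega))
          · rw [Finset.mem_singleton.1 hb]
            exact F.adj_step (i := i) (j := 2*t) (by omega) (by omega)
        rcases Finset.mem_union.1 hp'' with hp3 | hp3
        · -- Jodd
          obtain ⟨i, hi, him⟩ := Finset.mem_biUnion.1 hp3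
          have hip := (Finset.mem_filter.1 hi).2
          have hk2 := F.hk2 i
          rcases Finset.mem_union.1 him with h | h
          · obtain ⟨j, hjm, rfl⟩ := Finset.mem_image.1 h
            have hj := Finset.mem_Icc.1 hjm
            intro a ha b hb
            rw [Finset.mem_singleton.1 ha, Finset.mem_singleton.1 hb]
            exact F.adj_step (i := i) (by omega) (by omega)
          · rcases Finset.mem_insert.1 h with rfl | h
            · intro a ha b hb
              rw [Finset.mem_singleton.1 ha, Finset.mem_singleton.1 hb]
              exact F.adj_w1 i
            · rw [Finset.mem_singleton.1 h]
              intro a ha b hb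
              rw [Finset.mem_singleton.1 ha, Finset.mem_singleton.1 hb]
              exact F.adj_wk i
        · -- J4
          obtain ⟨i, hi, rfl⟩ := Finset.mem_image.1 hp3
          have hki := (Finset.mem_filter.1 hi).2
          have hwk := F.adj_wk i
          rw [show F.k i = 3 from hki] at hwk
          intro a ha b hb
          rcases Finset.mem_insert.1 ha with rfl | ha
          · rcases Finset.mem_insert.1 hb with rfl | hb
            · exact F.adj_w1 i
            · rw [Finset.mem_singleton.1 hb]
              exact hwk
          · rw [Finset.mem_singleton.1 ha]
            rcases Finset.mem_insert.1 hb with rfl | hb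
            · exact F.adj_symm (F.adj_step (i := i) le_rfl (by omega))
            · rw [Finset.mem_singleton.1 hb]
              exact F.adj_step (i := i) (by omega) (by omega)
      rcases hor with ⟨hu, hv⟩ | ⟨hu, hv⟩
      · exact hsound u hu v hv
      · exact F.adj_symm (hsound v hv u hu)
  · -- cardinality bound
    set Sw : Finset (Finset V) := {({F.w} : Finset V)} with hSwd
    set Sodd : Finset (Finset V) := Po.biUnion (fun i =>
      (Finset.Icc 1 (F.k i)).image (fun j => ({F.x i j} : Finset V))) with hSoddd
    set S4a : Finset (Finset V) := P4.image (fun i => ({F.w, F.x i 2} : Finset V)) with hS4ad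
    set S4b : Finset (Finset V) :=
      P4.image (fun i => ({F.x i 1, F.x i 3} : Finset V)) with hS4bd
    set SeA : Finset (Finset V) := Pe.biUnion (fun i =>
      (Finset.Icc 1 ((F.k i - 1)/2)).image (fun t => ({F.x i (2*t)} : Finset V))) with hSeAd
    set SeB : Finset (Finset V) := Pe.biUnion (fun i =>
      (Finset.Icc 1 ((F.k i - 1)/2)).image
        (fun t => ({F.x i (2*t-1), F.x i (2*t+1)} : Finset V))) with hSeBd
    set SL : Finset (Finset V) := if Pe.card = 0 then (∅ : Finset (Finset V)) else {L}
      with hSLd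
    set S : Finset (Finset V) := Sw ∪ Sodd ∪ S4a ∪ S4b ∪ SeA ∪ SeB ∪ SL with hSd
    have hmw : ({F.w} : Finset V) ∈ S := by
      rw [hSd]
      exact Finset.mem_union.2 (Or.inl (Finset.mem_union.2 (Or.inl (Finset.mem_union.2
        (Or.inl (Finset.mem_union.2 (Or.inl (Finset.mem_union.2 (Or.inl
        (Finset.mem_union.2 (Or.inl (by rw [hSwd]; simp))))))))))))
    have hmo : ∀ (i : Fin F.m) (j : ℕ), i ∈ Po → 1 ≤ j → j ≤ F.k i →
        ({F.x i j} : Finset V) ∈ S := by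
      intro i j hi h1 h2
      rw [hSd]
      refine Finset.mem_union.2 (Or.inl (Finset.mem_union.2 (Or.inl (Finset.mem_union.2
        (Or.inl (Finset.mem_union.2 (Or.inl (Finset.mem_union.2 (Or.inl
        (Finset.mem_union.2 (Or.inr ?_)))))))))))
      rw [hSoddd]
      exact Finset.mem_biUnion.2 ⟨i, hi, Finset.mem_image.2
        ⟨j, Finset.mem_Icc.2 ⟨h1, h2⟩, rfl⟩⟩
    have hm4a : ∀ i : Fin F.m, i ∈ P4 → ({F.w, F.x i 2} : Finset V) ∈ S := by
      intro i hi
      rw [hSd]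
      refine Finset.mem_union.2 (Or.inl (Finset.mem_union.2 (Or.inl (Finset.mem_union.2
        (Or.inl (Finset.mem_union.2 (Or.inl (Finset.mem_union.2 (Or.inr ?_)))))))))
      rw [hS4ad]
      exact Finset.mem_image.2 ⟨i, hi, rfl⟩
    have hm4b : ∀ i : Fin F.m, i ∈ P4 → ({F.x i 1, F.x i 3} : Finset V) ∈ S := by
      intro i hi
      rw [hSd]
      refine Finset.mem_union.2 (Or.inl (Finset.mem_union.2 (Or.inl (Finset.mem_union.2
        (Or.inl (Finset.mem_union.2 (Or.inr ?_)))))))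
      rw [hS4bd]
      exact Finset.mem_image.2 ⟨i, hi, rfl⟩
    have hmeA : ∀ (i : Fin F.m) (t : ℕ), i ∈ Pe → 1 ≤ t → t ≤ (F.k i - 1)/2 →
        ({F.x i (2*t)} : Finset V) ∈ S := by
      intro i t hi h1 h2
      rw [hSd]
      refine Finset.mem_union.2 (Or.inl (Finset.mem_union.2 (Or.inl (Finset.mem_union.2
        (Or.inr ?_)))))
      rw [hSeAd]
      exact Finset.mem_biUnion.2 ⟨i, hi, Finset.mem_image.2
        ⟨t, Finset.mem_Icc.2 ⟨h1, h2⟩, rfl⟩⟩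
    have hmeB : ∀ (i : Fin F.m) (t : ℕ), i ∈ Pe → 1 ≤ t → t ≤ (F.k i - 1)/2 →
        ({F.x i (2*t-1), F.x i (2*t+1)} : Finset V) ∈ S := by
      intro i t hi h1 h2
      rw [hSd]
      refine Finset.mem_union.2 (Or.inl (Finset.mem_union.2 (Or.inr ?_)))
      rw [hSeBd]
      exact Finset.mem_biUnion.2 ⟨i, hi, Finset.mem_image.2
        ⟨t, Finset.mem_Icc.2 ⟨h1, h2⟩, rfl⟩⟩
    have hmL : Pe.card ≠ 0 → L ∈ S := by
      intro hne
      rw [hSd]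
      refine Finset.mem_union.2 (Or.inr ?_)
      rw [hSLd, if_neg hne]
      simp
    have hcl : ∀ p ∈ CC, p.1 ∈ S ∧ p.2 ∈ S := by
      intro p hp
      rw [hCCd] at hp
      rcases Finset.mem_union.1 hp with hp' | hp'
      swap
      · rw [hJl] at hp'
        split at hp'
        · exact absurd hp' (Finset.notMem_empty _)
        · rename_i hne
          rw [Finset.mem_singleton.1 hp']
          exact ⟨hmw, hmL hne⟩
      rcases Finset.mem_union.1 hp' with hp'' | hp''
      swap
      · obtain ⟨i, hi, him⟩ := Finset.mem_biUnion.1 hp''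
        obtain ⟨t, htm, rfl⟩ := Finset.mem_image.1 him
        have ht := Finset.mem_Icc.1 htm
        exact ⟨hmeA i t hi ht.1 ht.2, hmeB i t hi ht.1 ht.2⟩
      rcases Finset.mem_union.1 hp'' with hp3 | hp3
      · obtain ⟨i, hi, him⟩ := Finset.mem_biUnion.1 hp3
        have hk2 := F.hk2 i
        rcases Finset.mem_union.1 him with h | h
        · obtain ⟨j, hjm, rfl⟩ := Finset.mem_image.1 h
          have hj := Finset.mem_Icc.1 hjm
          exact ⟨hmo i j hi hj.1 (by omega), hmo i (j+1) hi (by omega) (by omega)⟩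
        · rcases Finset.mem_insert.1 h with rfl | h
          · exact ⟨hmw, hmo i 1 hi le_rfl (by omega)⟩
          · rw [Finset.mem_singleton.1 h]
            exact ⟨hmw, hmo i (F.k i) hi (by omega) le_rfl⟩
      · obtain ⟨i, hi, rfl⟩ := Finset.mem_image.1 hp3
        exact ⟨hm4a i hi, hm4b i hi⟩
    have hsub : sjComponents CC ⊆ S := by
      intro D hD
      rcases Finset.mem_union.1 hD with h | h
      · obtain ⟨p, hp, rfl⟩ := Finset.mem_image.1 h
        exact (hcl p hp).1
      · obtain ⟨p, hp, rfl⟩ := Finset.mem_image.1 h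
        exact (hcl p hp).2
    have hSodd_card : Sodd.card ≤ ∑ i ∈ Po, F.k i := by
      rw [hSoddd]
      refine le_trans (Finset.card_biUnion_le) (Finset.sum_le_sum ?_)
      intro i _
      refine le_trans (Finset.card_image_le) ?_
      rw [Nat.card_Icc]
      omega
    have hSeA_card : SeA.card ≤ ∑ i ∈ Pe, (F.k i - 1)/2 := by
      rw [hSeAd]
      refine le_trans (Finset.card_biUnion_le) (Finset.sum_le_sum ?_)
      intro i _
      refine le_trans (Finset.card_image_le) ?_
      rw [Nat.card_Icc]
      omega
    have hSeB_card : SeB.card ≤ ∑ i ∈ Pe, (F.k i - 1)/2 := by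
      rw [hSeBd]
      refine le_trans (Finset.card_biUnion_le) (Finset.sum_le_sum ?_)
      intro i _
      refine le_trans (Finset.card_image_le) ?_
      rw [Nat.card_Icc]
      omega
    have hhalf : ∑ i ∈ Pe, (F.k i - 1)/2 + ∑ i ∈ Pe, (F.k i - 1)/2
        = ∑ i ∈ Pe, (F.k i - 1) := by
      rw [← Finset.sum_add_distrib]
      refine Finset.sum_congr rfl ?_
      intro i hi
      have := (Finset.mem_filter.1 hi).2
      omega
    have hSL_card : SL.card ≤ if Pe.card = 0 then 0 else 1 := by
      rw [hSLd]
      split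
      · simp
      · simp
    have hS4a_card : S4a.card ≤ P4.card := Finset.card_image_le
    have hS4b_card : S4b.card ≤ P4.card := Finset.card_image_le
    have hSw_card : Sw.card = 1 := by rw [hSwd]; simp
    have hchain : S.card ≤ Sw.card + Sodd.card + S4a.card + S4b.card + SeA.card
        + SeB.card + SL.card := by
      rw [hSd]
      calc (Sw ∪ Sodd ∪ S4a ∪ S4b ∪ SeA ∪ SeB ∪ SL).card
          ≤ (Sw ∪ Sodd ∪ S4a ∪ S4b ∪ SeA ∪ SeB).card + SL.card :=
            Finset.card_union_le _ _
        _ ≤ (Sw ∪ Sodd ∪ S4a ∪ S4b ∪ SeA).card + SeB.card + SL.card := by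
            have := Finset.card_union_le (Sw ∪ Sodd ∪ S4a ∪ S4b ∪ SeA) SeB
            omega
        _ ≤ (Sw ∪ Sodd ∪ S4a ∪ S4b).card + SeA.card + SeB.card + SL.card := by
            have := Finset.card_union_le (Sw ∪ Sodd ∪ S4a ∪ S4b) SeA
            omega
        _ ≤ (Sw ∪ Sodd ∪ S4a).card + S4b.card + SeA.card + SeB.card + SL.card := by
            have := Finset.card_union_le (Sw ∪ Sodd ∪ S4a) S4b
            omega
        _ ≤ (Sw ∪ Sodd).card + S4a.card + S4b.card + SeA.card + SeB.card + SL.card := by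
            have := Finset.card_union_le (Sw ∪ Sodd) S4a
            omega
        _ ≤ Sw.card + Sodd.card + S4a.card + S4b.card + SeA.card + SeB.card + SL.card := by
            have := Finset.card_union_le Sw Sodd
            omega
    have hfinal := le_trans (Finset.card_le_card hsub) hchain
    omega

end Fl
end Stmt19
namespace Stmt19
namespace Fl
open LoopGraph Finset
open scoped Classical
set_option linter.unusedSectionVars false
set_option linter.unusedVariables false

variable {V : Type*} [Fintype V] [DecidableEq V] (F : Fl V)

lemma sum_split (g : Fin F.m → ℕ) :
    ∑ i, g i = ∑ i ∈ Finset.univ.filter (fun i => F.k i = 3), g i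
      + ∑ i ∈ Finset.univ.filter (fun i => F.k i % 2 = 1 ∧ F.k i ≠ 3), g i
      + ∑ i ∈ Finset.univ.filter (fun i => F.k i % 2 = 0), g i := by
  classical
  have e1 : ∑ i, g i
      = ∑ i ∈ Finset.univ.filter (fun i => F.k i = 3), g i
        + ∑ i ∈ Finset.univ.filter (fun i => ¬ F.k i = 3), g i :=
    (Finset.sum_filter_add_sum_filter_not _ _ _).symm
  have e2 : ∑ i ∈ Finset.univ.filter (fun i => ¬ F.k i = 3), g i
      = ∑ i ∈ (Finset.univ.filter (fun i => ¬ F.k i = 3)).filter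
          (fun i => F.k i % 2 = 1), g i
        + ∑ i ∈ (Finset.univ.filter (fun i => ¬ F.k i = 3)).filter
          (fun i => ¬ F.k i % 2 = 1), g i :=
    (Finset.sum_filter_add_sum_filter_not _ _ _).symm
  have e3 : (Finset.univ.filter (fun i => ¬ F.k i = 3)).filter
      (fun i => F.k i % 2 = 1)
      = Finset.univ.filter (fun i => F.k i % 2 = 1 ∧ F.k i ≠ 3) := by
    rw [Finset.filter_filter]
    apply Finset.filter_congr
    intro i _
    constructor
    · rintro ⟨h1, h2⟩; exact ⟨h2, h1⟩
    · rintro ⟨h1, h2⟩; exact ⟨h2, h1⟩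
  have e4 : (Finset.univ.filter (fun i => ¬ F.k i = 3)).filter
      (fun i => ¬ F.k i % 2 = 1) = Finset.univ.filter (fun i => F.k i % 2 = 0) := by
    rw [Finset.filter_filter]
    apply Finset.filter_congr
    intro i _
    constructor
    · rintro ⟨h1, h2⟩; omega
    · intro h; omega
  rw [e1, e2, e3, e4]
  omega

end Fl

open LoopGraph Finset

theorem main_thm {V : Type*} [Fintype V] [DecidableEq V] (G : LoopGraph V)
    (m : ℕ) (hm : 1 ≤ m) (len : Fin m → ℕ) (hlen : ∀ i, 3 ≤ len i)
    (w : V) (x : Fin m → ℕ → V)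
    (hxw : ∀ i j, 1 ≤ j → j ≤ len i - 1 → x i j ≠ w)
    (hinj : ∀ i j i' j', 1 ≤ j → j ≤ len i - 1 → 1 ≤ j' → j' ≤ len i' - 1 →
      x i j = x i' j' → i = i' ∧ j = j')
    (hcover : ∀ z : V, z = w ∨ ∃ i j, 1 ≤ j ∧ j ≤ len i - 1 ∧ z = x i j)
    (hadj : ∀ a b : V, G.Adj a b ↔ ∃ i : Fin m,
      ((a = w ∧ b = x i 1) ∨ (b = w ∧ a = x i 1)) ∨
      ((a = w ∧ b = x i (len i - 1)) ∨ (b = w ∧ a = x i (len i - 1))) ∨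
      (∃ j, 1 ≤ j ∧ j + 1 ≤ len i - 1 ∧
        ((a = x i j ∧ b = x i (j + 1)) ∨ (b = x i j ∧ a = x i (j + 1))))) :
    G.gap =
      (if (Finset.univ.filter fun i => len i ≠ 4 ∧ Even (len i)).card
          + (Finset.univ.filter fun i => Odd (len i)).card = 0
       then (Finset.univ.filter fun i => len i = 4).card + 1
       else (Finset.univ.filter fun i => len i = 4).card
          + ((Finset.univ.filter fun i => len i ≠ 4 ∧ Even (len i)).card - 1)) := by
  classical
  set F : Fl V := ⟨G, m, hm, len, hlen, w, x, hxw, hinj, hcover, hadj⟩ with hF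
  -- translate the filters
  have hfeq : (Finset.univ.filter fun i => len i = 4)
      = (Finset.univ.filter fun i : Fin m => F.k i = 3) := by
    apply Finset.filter_congr
    intro i _
    have := hlen i
    have hki : F.k i = len i - 1 := rfl
    constructor
    · intro h; omega
    · intro h; omega
  have heeq : (Finset.univ.filter fun i => len i ≠ 4 ∧ Even (len i))
      = (Finset.univ.filter fun i : Fin m => F.k i % 2 = 1 ∧ F.k i ≠ 3) := by
    apply Finset.filter_congr
    intro i _
    have := hlen i
    have hki : F.k i = len i - 1 := rfl
    rw [Nat.even_iff]
    constructor
    · rintro ⟨h1, h2⟩; omega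
    · rintro ⟨h1, h2⟩; omega
  have hoeq : (Finset.univ.filter fun i => Odd (len i))
      = (Finset.univ.filter fun i : Fin m => F.k i % 2 = 0) := by
    apply Finset.filter_congr
    intro i _
    have := hlen i
    have hki : F.k i = len i - 1 := rfl
    rw [Nat.odd_iff]
    constructor
    · intro h; omega
    · intro h; omega
  rw [hfeq, heeq, hoeq]
  set P4 : Finset (Fin m) := Finset.univ.filter (fun i : Fin m => F.k i = 3) with hP4
  set Pe : Finset (Fin m) :=
    Finset.univ.filter (fun i : Fin m => F.k i % 2 = 1 ∧ F.k i ≠ 3) with hPe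
  set Po : Finset (Fin m) := Finset.univ.filter (fun i : Fin m => F.k i % 2 = 0) with hPo
  -- numeric facts about the sums
  have hsplitk : ∑ i : Fin m, F.k i
      = ∑ i ∈ P4, F.k i + ∑ i ∈ Pe, F.k i + ∑ i ∈ Po, F.k i := F.sum_split _
  have hsplit1 : (m : ℕ) = P4.card + Pe.card + Po.card := by
    have h := F.sum_split (fun _ => (1:ℕ))
    simp only [Finset.sum_const, smul_eq_mul, mul_one, Finset.card_univ,
      Fintype.card_fin] at h
    exact h
  have hsum4 : ∑ i ∈ P4, F.k i = 3 * P4.card := by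
    rw [Finset.sum_congr rfl (fun i hi => (Finset.mem_filter.1 hi).2)]
    simp [mul_comm]
    rfl
  have hsume : ∑ i ∈ Pe, F.k i = ∑ i ∈ Pe, (F.k i - 1) + Pe.card := by
    have h : ∀ i ∈ Pe, F.k i = (F.k i - 1) + 1 := by
      intro i hi
      have := F.hk2 i
      omega
    rw [Finset.sum_congr rfl h, Finset.sum_add_distrib]
    simp
  -- upper bound cover
  have hupper : ∃ CU : Finset (Finset V × Finset V), G.IsCover CU ∧
      (sjComponents CU).card + (if Pe.card + Po.card = 0 then P4.card + 1
        else P4.card + (Pe.card - 1)) ≤ 1 + ∑ i : Fin m, F.k i := by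
    by_cases hcase : Pe.card + Po.card = 0
    · have hPee : Pe = ∅ := Finset.card_eq_zero.1 (by omega)
      have hPoe : Po = ∅ := Finset.card_eq_zero.1 (by omega)
      have h3 : ∀ i, F.k i = 3 := by
        intro i
        by_contra h
        have hk2 := F.hk2 i
        rcases (by omega : F.k i % 2 = 1 ∨ F.k i % 2 = 0) with hp | hp
        · have hmem : i ∈ Pe := Finset.mem_filter.2 ⟨Finset.mem_univ i, hp, h⟩
          rw [hPee] at hmem
          exact Finset.notMem_empty i hmem
        · have hmem : i ∈ Po := Finset.mem_filter.2 ⟨Finset.mem_univ i, hp⟩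
          rw [hPoe] at hmem
          exact Finset.notMem_empty i hmem
      obtain ⟨CU, hCU, hcard⟩ := F.cover4 h3
      have hcard' : (sjComponents CU).card ≤ 2 * m := hcard
      refine ⟨CU, hCU, ?_⟩
      rw [if_pos hcase]
      have hPe0 : ∑ i ∈ Pe, F.k i = 0 := by rw [hPee]; simp
      have hPo0 : ∑ i ∈ Po, F.k i = 0 := by rw [hPoe]; simp
      omega
    · obtain ⟨CU, hCU, hcard⟩ := F.cover_gen
      have hcard' : (sjComponents CU).card ≤
          1 + (∑ i ∈ Po, F.k i) + 2 * P4.card + (∑ i ∈ Pe, (F.k i - 1))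
            + (if Pe.card = 0 then 0 else 1) := hcard
      refine ⟨CU, hCU, ?_⟩
      rw [if_neg hcase]
      by_cases he : Pe.card = 0
      · rw [if_pos he] at hcard'
        omega
      · rw [if_neg he] at hcard'
        omega
  obtain ⟨CU, hCU, hCUb⟩ := hupper
  have hne : {n | ∃ C : Finset (Finset V × Finset V),
      G.IsCover C ∧ (sjComponents C).card = n}.Nonempty := ⟨_, CU, hCU, rfl⟩
  have hstp_le : G.stp ≤ (sjComponents CU).card := Nat.sInf_le ⟨CU, hCU, rfl⟩
  obtain ⟨C0, hC0, hC0card⟩ := Nat.sInf_mem hne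
  have hC0card' : (sjComponents C0).card = G.stp := hC0card
  have hlow : 1 + ∑ i : Fin m, F.k i ≤ (sjComponents C0).card +
      (if Pe.card + Po.card = 0 then P4.card + 1
       else P4.card + (Pe.card - 1)) := F.lower_bound (C := C0) hC0
  rw [hC0card'] at hlow
  have hNV : Fintype.card V = 1 + ∑ i : Fin m, F.k i := F.card_V
  have hgap : G.gap = Fintype.card V - G.stp := rfl
  rw [hgap, hNV]
  by_cases hcase : Pe.card + Po.card = 0
  · rw [if_pos hcase] at hlow hCUb ⊢
    omega
  · rw [if_neg hcase] at hlow hCUb ⊢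
    omega

end Stmt19

/-- Let `G` consist of a vertex `w` together with pendant cycles
attached at `w`, pairwise meeting only at `w`; the `i`-th cycle has length
`len i ≥ 3`, realized as `w — x i 1 — ⋯ — x i (len i - 1) — w`. With
`f` the number of 4-cycles, `e` the number of even cycles of length ≠ 4 and
`o` the number of odd cycles, `gap G = f + max {0, e - 1}` if `e + o ≥ 1` and
`gap G = f + 1` if `e + o = 0` (ℕ-subtraction realizes the max with 0). -/
theorem stmt_19 {V : Type*} [Fintype V] [DecidableEq V] (G : LoopGraph V)
    (m : ℕ) (hm : 1 ≤ m) (len : Fin m → ℕ) (hlen : ∀ i, 3 ≤ len i)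
    (w : V) (x : Fin m → ℕ → V)
    (hxw : ∀ i j, 1 ≤ j → j ≤ len i - 1 → x i j ≠ w)
    (hinj : ∀ i j i' j', 1 ≤ j → j ≤ len i - 1 → 1 ≤ j' → j' ≤ len i' - 1 →
      x i j = x i' j' → i = i' ∧ j = j')
    (hcover : ∀ z : V, z = w ∨ ∃ i j, 1 ≤ j ∧ j ≤ len i - 1 ∧ z = x i j)
    (hadj : ∀ a b : V, G.Adj a b ↔ ∃ i : Fin m,
      ((a = w ∧ b = x i 1) ∨ (b = w ∧ a = x i 1)) ∨
      ((a = w ∧ b = x i (len i - 1)) ∨ (b = w ∧ a = x i (len i - 1))) ∨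
      (∃ j, 1 ≤ j ∧ j + 1 ≤ len i - 1 ∧
        ((a = x i j ∧ b = x i (j + 1)) ∨ (b = x i j ∧ a = x i (j + 1))))) :
    G.gap =
      (if (Finset.univ.filter fun i => len i ≠ 4 ∧ Even (len i)).card
          + (Finset.univ.filter fun i => Odd (len i)).card = 0
       then (Finset.univ.filter fun i => len i = 4).card + 1
       else (Finset.univ.filter fun i => len i = 4).card
          + ((Finset.univ.filter fun i => len i ≠ 4 ∧ Even (len i)).card - 1)) := by
  exact Stmt19.main_thm G m hm len hlen w x hxw hinj hcover hadj
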